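/- arXiv:1104.1937 — 12 statements merged into one kernel-verified Lean document; each statement's English description precedes it below -/
import Mathlib

section
/- Let k be a perfect field of characteristic p > 0, let R be a finitely generated commutative k-algebra, let e ≥ 1, and let φ : F^e_* R → R be a surjective R-linear map. Then the set of φ-compatible ideals of R is finite. -/
/-!
Let `q = p ^ e` and `φ u = 1`. Since `x = φ (x ^ q * u)`, compatible ideals are radical, so they
form a distributive sublattice of the ideals of `R`, which satisfies the ascending chain condition
as `R` is noetherian. For the descending one, filter `R` by the finite-dimensional `k`-spans `W d`
of the monomials of degree `≤ d` in a set of generators. As `k` is perfect, `φ` divides degrees by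
`q` up to a constant, `φ (W d) ⊆ W (d / q + D)`; hence every compatible ideal `J` is generated by
`J ∩ W B` for one `B` independent of `J`, and `J ↦ J ∩ W B` embeds the compatible ideals into the
subspaces of `W B`. Finally, a distributive lattice with both chain conditions is finite.
-/

open Submodule

theorem DistribLattice.finite_Ici {α : Type*} [DistribLattice α] [WellFoundedLT α]
    [WellFoundedGT α] (a : α) : (Set.Ici a).Finite := by
  induction a using WellFoundedGT.induction with
  | _ a ih =>
  by_cases hmax : IsMax a
  · exact (Set.finite_singleton a).subset fun x hx => (hmax.eq_of_le hx).symm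
  obtain ⟨x, hax⟩ := not_isMax_iff.mp hmax
  obtain ⟨b, hab, -⟩ := exists_covBy_le_of_lt hax
  -- `x ↦ (x ⊔ b, x ⊓ b)` is injective by distributivity, and `x ⊓ b ∈ {a, b}` as `b` covers `a`.
  refine Set.Finite.of_finite_image (f := fun x => (x ⊔ b, x ⊓ b)) ?_
    fun x _ y _ h => eq_of_inf_eq_sup_eq (Prod.ext_iff.mp h).2 (Prod.ext_iff.mp h).1
  refine ((ih b hab.lt).prod (Set.toFinite {a, b})).subset ?_
  rintro _ ⟨x, hx, rfl⟩
  exact ⟨le_sup_right, hab.eq_or_eq (le_inf hx hab.le) inf_le_right⟩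

theorem DistribLattice.finite {α : Type*} [DistribLattice α] [WellFoundedLT α]
    [WellFoundedGT α] : Finite α := by
  cases isEmpty_or_nonempty α
  · infer_instance
  obtain ⟨m, -, hm⟩ := wellFounded_lt.has_min (Set.univ : Set α) Set.univ_nonempty
  have hbot : Set.Ici m = Set.univ :=
    Set.eq_univ_of_forall fun x => inf_eq_right.mp (inf_le_right.eq_of_not_lt (hm _ trivial))
  exact Set.finite_univ_iff.mp (hbot ▸ finite_Ici m)

theorem Ideal.inf_sup_le_of_isRadical {R : Type*} [CommRing R] {I J K : Ideal R}
    (h : (I ⊓ J ⊔ I ⊓ K).IsRadical) : I ⊓ (J ⊔ K) ≤ I ⊓ J ⊔ I ⊓ K :=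
  calc I ⊓ (J ⊔ K) ≤ (I * (J ⊔ K)).radical := by
        rw [Ideal.radical_mul]; exact inf_le_inf I.le_radical (J ⊔ K).le_radical
    _ = (I * J ⊔ I * K).radical := by rw [Ideal.mul_sup]
    _ ≤ (I ⊓ J ⊔ I ⊓ K).radical :=
        Ideal.radical_mono (sup_le_sup Ideal.mul_le_inf Ideal.mul_le_inf)
    _ = I ⊓ J ⊔ I ⊓ K := h.radical

section Compatible

variable {R : Type*} [CommRing R]

def compatibleIdeals (φ : R →+ R) : Sublattice (Ideal R) where
  carrier := {J | ∀ x ∈ J, φ x ∈ J}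
  supClosed' I hI J hJ x hx := by
    obtain ⟨y, hy, z, hz, rfl⟩ := Submodule.mem_sup.mp hx
    rw [map_add]
    exact Submodule.add_mem_sup (hI y hy) (hJ z hz)
  infClosed' I hI J hJ x hx := ⟨hI x hx.1, hJ x hx.2⟩

variable {φ : R →+ R} {q : ℕ} {u : R}

theorem mem_of_pow_mem_of_mem_compatibleIdeals (hφ : ∀ r x, φ (r ^ q * x) = r * φ x)
    (hu : φ u = 1) {J : Ideal R} (hJ : J ∈ compatibleIdeals φ) {x : R} (hx : x ^ q ∈ J) :
    x ∈ J := by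
  simpa [hφ, hu] using hJ _ (J.mul_mem_right u hx)

theorem isRadical_of_mem_compatibleIdeals (hφ : ∀ r x, φ (r ^ q * x) = r * φ x)
    (hu : φ u = 1) (hq : 1 < q) {J : Ideal R} (hJ : J ∈ compatibleIdeals φ) : J.IsRadical := by
  rintro x ⟨m, hm⟩
  have hiter : ∀ n, x ^ q ^ n ∈ J → x ∈ J := by
    intro n
    induction n with
    | zero => simp
    | succ n ih =>
      exact fun h => ih <|
        mem_of_pow_mem_of_mem_compatibleIdeals hφ hu hJ (by rwa [← pow_mul, ← pow_succ])
  exact hiter m (J.pow_mem_of_pow_mem hm (Nat.lt_pow_self hq).le)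

theorem compatibleIdeals_inf_sup_le (hφ : ∀ r x, φ (r ^ q * x) = r * φ x) (hu : φ u = 1)
    (hq : 1 < q) (I J K : compatibleIdeals φ) : I ⊓ (J ⊔ K) ≤ I ⊓ J ⊔ I ⊓ K :=
  Ideal.inf_sup_le_of_isRadical (isRadical_of_mem_compatibleIdeals hφ hu hq (I ⊓ J ⊔ I ⊓ K).2)

end Compatible

section DegreeFiltration

variable (k : Type*) {R ι : Type*} [Field k] [CommRing R] [Algebra k R] (g : ι → R)

def degreeLE [Fintype ι] (d : ℕ) : Submodule k R :=
  span k ((fun a : ι → ℕ => ∏ i, g i ^ a i) '' {a | ∑ i, a i ≤ d})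

variable {k g} [Fintype ι]

theorem prod_pow_mem_degreeLE {d : ℕ} {a : ι → ℕ} (ha : ∑ i, a i ≤ d) :
    ∏ i, g i ^ a i ∈ degreeLE k g d :=
  subset_span ⟨a, ha, rfl⟩

theorem degreeLE_mono : Monotone (degreeLE k g) :=
  fun _ _ h => span_mono (Set.image_mono fun _ ha => le_trans ha h)

theorem degreeLE_mul_degreeLE_le (d₁ d₂ : ℕ) :
    degreeLE k g d₁ * degreeLE k g d₂ ≤ degreeLE k g (d₁ + d₂) := by
  rw [degreeLE, degreeLE, span_mul_span]
  refine span_mono ?_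
  rintro _ ⟨_, ⟨a, ha, rfl⟩, _, ⟨b, hb, rfl⟩, rfl⟩
  refine ⟨a + b, ?_, ?_⟩
  · simpa [Finset.sum_add_distrib] using add_le_add ha hb
  · simp [pow_add, Finset.prod_mul_distrib]

theorem mul_mem_degreeLE {d₁ d₂ : ℕ} {x y : R} (hx : x ∈ degreeLE k g d₁)
    (hy : y ∈ degreeLE k g d₂) :
    x * y ∈ degreeLE k g (d₁ + d₂) :=
  degreeLE_mul_degreeLE_le d₁ d₂ (mul_mem_mul hx hy)

theorem exists_mem_degreeLE (hg : Algebra.adjoin k (Set.range g) = ⊤) (x : R) :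
    ∃ d, x ∈ degreeLE k g d := by
  rw [← mem_iSup_of_directed _ degreeLE_mono.directed_le]
  unfold degreeLE
  rw [iSup_span]
  have hx : x ∈ Subalgebra.toSubmodule (Algebra.adjoin k (Set.range g)) := by simp [hg]
  rw [Algebra.adjoin_eq_span] at hx
  refine span_mono ?_ hx
  intro y hy
  obtain ⟨a, rfl⟩ := Submonoid.mem_closure_range_iff_of_fintype.mp hy
  exact Set.mem_iUnion.mpr ⟨_, a, le_refl (∑ i, a i), rfl⟩

instance finiteDimensional_degreeLE (d : ℕ) : FiniteDimensional k (degreeLE k g d) := by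
  classical
  refine FiniteDimensional.span_of_finite k (Set.Finite.image _ ?_)
  exact (Set.finite_Iic (fun _ => d : ι → ℕ)).subset
    fun a ha i => (Finset.single_le_sum (fun j _ => Nat.zero_le (a j)) (Finset.mem_univ i)).trans ha

theorem prod_pow_eq_pow_mul_prod_pow_mod (q : ℕ) (a : ι → ℕ) :
    ∏ i, g i ^ a i = (∏ i, g i ^ (a i / q)) ^ q * ∏ i, g i ^ (a i % q) := by
  simp only [← Finset.prod_pow, ← Finset.prod_mul_distrib, ← pow_mul, ← pow_add, Nat.div_add_mod']

theorem prod_pow_fin_mem_degreeLE {q : ℕ} (c : ι → Fin q) :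
    ∏ i, g i ^ (c i : ℕ) ∈ degreeLE k g (Fintype.card ι * q) :=
  prod_pow_mem_degreeLE <| by
    simpa using Finset.sum_le_sum fun i (_ : i ∈ Finset.univ) => (c i).isLt.le

variable [DecidableEq ι] (p e : ℕ) [ExpChar R p] [ExpChar k p] [PerfectRing k p]

theorem exists_sum_pow_mul_of_mem_degreeLE {d : ℕ} {x : R} (hx : x ∈ degreeLE k g d) :
    ∃ s : (ι → Fin (p ^ e)) → R, (∀ c, s c ∈ degreeLE k g (d / p ^ e)) ∧
      ∑ c, s c ^ p ^ e * ∏ i, g i ^ (c i : ℕ) = x := by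
  have hq : 0 < p ^ e := pow_pos (expChar_pos k p) e
  induction hx using span_induction with
  | mem _ hy =>
    obtain ⟨a, ha, rfl⟩ := hy
    let c₀ : ι → Fin (p ^ e) := fun i => ⟨a i % p ^ e, Nat.mod_lt _ hq⟩
    refine ⟨fun c => if c = c₀ then ∏ i, g i ^ (a i / p ^ e) else 0, fun c => ?_, ?_⟩
    · dsimp only
      split_ifs
      · refine prod_pow_mem_degreeLE ((Nat.le_div_iff_mul_le hq).mpr ?_)
        rw [Finset.sum_mul]
        exact (Finset.sum_le_sum fun i _ => Nat.div_mul_le_self (a i) _).trans ha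
      · exact zero_mem _
    · simpa [ite_pow, zero_pow hq.ne', c₀] using (prod_pow_eq_pow_mul_prod_pow_mod (p ^ e) a).symm
  | zero => exact ⟨0, fun _ => zero_mem _, by simp [zero_pow hq.ne']⟩
  | add _ _ _ _ h₁ h₂ =>
    obtain ⟨s₁, hs₁, rfl⟩ := h₁
    obtain ⟨s₂, hs₂, rfl⟩ := h₂
    refine ⟨s₁ + s₂, fun c => add_mem (hs₁ c) (hs₂ c), ?_⟩
    rw [← Finset.sum_add_distrib]
    exact Finset.sum_congr rfl fun c _ => by rw [Pi.add_apply, add_pow_expChar_pow, add_mul]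
  | smul c _ _ h =>
    obtain ⟨s, hs, rfl⟩ := h
    obtain ⟨b, rfl⟩ := (bijective_iterateFrobenius k p e).2 c
    refine ⟨b • s, fun c => smul_mem _ b (hs c), ?_⟩
    simp [Finset.smul_sum, smul_pow, iterateFrobenius_def]

variable {p e} {φ : R →+ R}

theorem exists_map_mem_degreeLE (hg : Algebra.adjoin k (Set.range g) = ⊤)
    (hφ : ∀ r x, φ (r ^ p ^ e * x) = r * φ x) :
    ∃ D, ∀ d, ∀ x ∈ degreeLE k g d, φ x ∈ degreeLE k g (d / p ^ e + D) := by
  choose D hD using fun c : ι → Fin (p ^ e) => exists_mem_degreeLE hg (φ (∏ i, g i ^ (c i : ℕ)))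
  refine ⟨Finset.univ.sup D, fun d x hx => ?_⟩
  obtain ⟨s, hs, rfl⟩ := exists_sum_pow_mul_of_mem_degreeLE p e hx
  simp only [map_sum, hφ]
  exact sum_mem fun c _ =>
    mul_mem_degreeLE (hs c) (degreeLE_mono (Finset.le_sup (Finset.mem_univ c)) (hD c))

theorem le_span_degreeLE_of_le_span_degreeLE (hg : Algebra.adjoin k (Set.range g) = ⊤)
    (hφ : ∀ r x, φ (r ^ p ^ e * x) = r * φ x) {u : R} (hu : φ u = 1) {J : Ideal R}
    (hJ : J ∈ compatibleIdeals φ) {D : ℕ}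
    (hD : ∀ d, ∀ x ∈ degreeLE k g d, φ x ∈ degreeLE k g (d / p ^ e + D)) {d : ℕ}
    (h : J ≤ Ideal.span (degreeLE k g d ⊓ J.restrictScalars k : Submodule k R)) :
    J ≤ Ideal.span (degreeLE k g ((Fintype.card ι * p ^ e + d) / p ^ e + D) ⊓
      J.restrictScalars k : Submodule k R) := by
  intro x hx
  have hxq : x ^ p ^ e * u ∈ Ideal.span (degreeLE k g d ⊓ J.restrictScalars k : Submodule k R) :=
    h (J.mul_mem_right u (J.pow_mem_of_mem hx _ (pow_pos (expChar_pos R p) e)))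
  obtain ⟨n, f, z, hz⟩ := mem_span_set'.mp hxq
  -- `x = φ (∑ fᵢ • zᵢ)`; expanding `fᵢ = ∑ s c ^ q * τ c` with `τ c = ∏ g i ^ c i` gives
  -- `φ (fᵢ * zᵢ) = ∑ s c * φ (τ c * zᵢ)`, and `τ c * zᵢ` has degree `≤ card ι * q + d`.
  rw [← mul_one x, ← hu, ← hφ, ← hz, map_sum]
  refine sum_mem fun i _ => ?_
  obtain ⟨d', hd'⟩ := exists_mem_degreeLE hg (f i)
  obtain ⟨s, -, hs⟩ := exists_sum_pow_mul_of_mem_degreeLE p e hd'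
  rw [smul_eq_mul, ← hs, Finset.sum_mul, map_sum]
  refine sum_mem fun c _ => ?_
  rw [mul_assoc, hφ]
  refine Ideal.mul_mem_left _ _ (Ideal.subset_span ⟨?_, ?_⟩)
  · exact hD _ _ (mul_mem_degreeLE (prod_pow_fin_mem_degreeLE c) (z i).2.1)
  · exact hJ _ (J.mul_mem_left _ (z i).2.2)

theorem exists_forall_le_span_degreeLE [IsNoetherianRing R]
    (hg : Algebra.adjoin k (Set.range g) = ⊤)
    (hφ : ∀ r x, φ (r ^ p ^ e * x) = r * φ x) {u : R} (hu : φ u = 1) (hq : 1 < p ^ e) :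
    ∃ B, ∀ J ∈ compatibleIdeals φ,
      J ≤ Ideal.span (degreeLE k g B ⊓ J.restrictScalars k : Submodule k R) := by
  classical
  obtain ⟨D, hD⟩ := exists_map_mem_degreeLE hg hφ
  refine ⟨Fintype.card ι * p ^ e + 2 * D, fun J hJ => ?_⟩
  have hex : ∃ d, J ≤ Ideal.span (degreeLE k g d ⊓ J.restrictScalars k : Submodule k R) := by
    obtain ⟨G, hG⟩ := IsNoetherian.noetherian J
    choose d hd using exists_mem_degreeLE hg
    refine ⟨G.sup d, ?_⟩
    conv_lhs => rw [← hG]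
    exact Ideal.span_le.mpr fun x hx => Ideal.subset_span
      ⟨degreeLE_mono (Finset.le_sup hx) (hd x), (hG ▸ Ideal.subset_span hx : x ∈ J)⟩
  -- the least generating degree `d` satisfies `d ≤ (card ι * q + d) / q + D`, so `d ≤ B`
  have hmin := Nat.find_min' hex
    (le_span_degreeLE_of_le_span_degreeLE hg hφ hu hJ hD (Nat.find_spec hex))
  have hB : Nat.find hex ≤ Fintype.card ι * p ^ e + 2 * D := by
    have : (Fintype.card ι * p ^ e + Nat.find hex) / p ^ e ≤
        (Fintype.card ι * p ^ e + Nat.find hex) / 2 := Nat.div_le_div_left hq (by norm_num)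
    omega
  exact (Nat.find_spec hex).trans (Ideal.span_mono (inf_le_inf_right _ (degreeLE_mono hB)))

theorem wellFoundedLT_compatibleIdeals [IsNoetherianRing R]
    (hg : Algebra.adjoin k (Set.range g) = ⊤) (hφ : ∀ r x, φ (r ^ p ^ e * x) = r * φ x) {u : R}
    (hu : φ u = 1) (hq : 1 < p ^ e) : WellFoundedLT (compatibleIdeals φ) := by
  obtain ⟨B, hB⟩ := exists_forall_le_span_degreeLE hg hφ hu hq
  let ρ (J : compatibleIdeals φ) : Submodule k (degreeLE k g B) :=
    (J.1.restrictScalars k).comap (degreeLE k g B).subtype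
  have hρ (J : compatibleIdeals φ) :
      J.1 = Ideal.span ((ρ J).map (degreeLE k g B).subtype : Submodule k R) := by
    rw [map_comap_subtype]
    exact le_antisymm (hB J J.2) (Ideal.span_le.mpr fun x hx => hx.2)
  have hmono : Monotone ρ := fun J J' h =>
    comap_mono (show J.1.restrictScalars k ≤ J'.1.restrictScalars k from h)
  have hinj : Function.Injective ρ := fun J J' h => Subtype.ext ((hρ J).trans (h ▸ hρ J').symm)
  exact (hmono.strictMono_of_injective hinj).wellFoundedLT

end DegreeFiltration

/-- If `R` is a finitely generated algebra over a perfect field of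
characteristic `p > 0` and `φ : F^e_* R → R` is a surjective `R`-linear map,
there are only finitely many `φ`-compatible ideals. -/
theorem stmt_1 {k : Type*} [Field k] (p : ℕ) (hp : p.Prime) [CharP k p]
    [PerfectField k]
    {R : Type*} [CommRing R] [Algebra k R] [Algebra.FiniteType k R]
    (e : ℕ) (he : 1 ≤ e)
    (φ : R → R)
    (hadd : ∀ x y : R, φ (x + y) = φ x + φ y)
    (hlin : ∀ r x : R, φ (r ^ p ^ e * x) = r * φ x)
    (hsurj : Function.Surjective φ) :
    {J : Ideal R | ∀ x ∈ J, φ x ∈ J}.Finite := by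
  classical
  have : Fact p.Prime := ⟨hp⟩
  cases subsingleton_or_nontrivial R
  · exact Set.toFinite _
  have : CharP R p := charP_of_injective_algebraMap (algebraMap k R).injective p
  have : IsNoetherianRing R := Algebra.FiniteType.isNoetherianRing k R
  obtain ⟨s, hs⟩ := Algebra.FiniteType.out (R := k) (A := R)
  obtain ⟨u, hu⟩ := hsurj 1
  have hq : 1 < p ^ e := Nat.one_lt_pow (by omega) hp.one_lt
  let φ' : R →+ R := AddMonoidHom.mk' φ hadd
  let := DistribLattice.ofInfSupLe (compatibleIdeals_inf_sup_le (φ := φ') hlin hu hq)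
  have := wellFoundedLT_compatibleIdeals (k := k) (g := ((↑) : s → R)) (by simpa using hs)
    (φ := φ') hlin hu hq
  exact Set.finite_coe_iff.mp (DistribLattice.finite (α := compatibleIdeals φ'))
end

section
/- Let R be a commutative ring of prime characteristic p, let e ≥ 1, and let φ : F^e_* R → R be a surjective R-linear map. Then every φ-compatible ideal of R is a radical ideal. -/
theorem Ideal.mem_of_pow_mem_of_map_mem {R : Type*} [CommSemiring R] {q : ℕ} {φ : R → R}
    (hlin : ∀ r x : R, φ (r ^ q * x) = r * φ x) (hone : 1 ∈ Set.range φ)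
    {J : Ideal R} (hJ : ∀ x ∈ J, φ x ∈ J) {r : R} (hr : r ^ q ∈ J) : r ∈ J := by
  obtain ⟨u, hu⟩ := hone
  simpa [hlin, hu] using hJ _ (J.mul_mem_right u hr)

theorem stmt_2_general {R : Type*} [CommRing R] (p : ℕ) (hp : p.Prime)
    (e : ℕ) (he : 1 ≤ e)
    (φ : R → R)
    (hlin : ∀ r x : R, φ (r ^ p ^ e * x) = r * φ x)
    (hsurj : Function.Surjective φ)
    (J : Ideal R) (hJ : ∀ x ∈ J, φ x ∈ J) :
    J.IsRadical := by
  have hq : 1 < p ^ e := Nat.one_lt_pow (by omega) hp.one_lt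
  exact (J.isRadical_iff_pow_one_lt _ hq).2 fun r ↦
    Ideal.mem_of_pow_mem_of_map_mem hlin (hsurj 1) hJ

/-- Every ideal compatible with a surjective `R`-linear map `φ : F^e_* R → R`
is radical. -/
theorem stmt_2 {R : Type*} [CommRing R] (p : ℕ) (hp : p.Prime) [CharP R p]
    (e : ℕ) (he : 1 ≤ e)
    (φ : R → R)
    (hadd : ∀ x y : R, φ (x + y) = φ x + φ y)
    (hlin : ∀ r x : R, φ (r ^ p ^ e * x) = r * φ x)
    (hsurj : Function.Surjective φ)
    (J : Ideal R) (hJ : ∀ x ∈ J, φ x ∈ J) :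
    J.IsRadical :=
  stmt_2_general p hp e he φ hlin hsurj J hJ
end

section
/- Let R be a Noetherian commutative ring of prime characteristic p, let e ≥ 1, let φ : F^e_* R → R be a surjective R-linear map, and let J ⊆ R be a φ-compatible ideal. Then every minimal prime ideal over J is φ-compatible. -/
/-!
Choose `c` with `φ c = 1`; then `x = φ (x ^ q * c)` with `q = p ^ e`, so a `φ`-compatible ideal
contains `x` as soon as it contains `x ^ q`, and is therefore radical. If `P` is a minimal prime
over such a `J` and `x ∈ P`, localizing at `P` gives `s ∉ P` with `s * x ∈ √J = J`. Then
`s ^ q * x ∈ J`, hence `s * φ x = φ (s ^ q * x) ∈ J ⊆ P`, and `φ x ∈ P` because `P` is prime.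
-/

namespace Ideal

variable {R : Type*} [CommRing R]

theorem exists_notMem_mul_mem_radical_of_mem_minimalPrimes {I P : Ideal R}
    (hP : P ∈ I.minimalPrimes) {x : R} (hx : x ∈ P) : ∃ s ∉ P, s * x ∈ I.radical := by
  have : P.IsPrime := hP.isPrime
  let Rₚ := Localization.AtPrime P
  have hxI : algebraMap R Rₚ x ∈ (I.map (algebraMap R Rₚ)).radical := by
    rw [IsLocalization.AtPrime.radical_map_of_mem_minimalPrimes Rₚ P I hP]
    exact mem_map_of_mem _ hx
  obtain ⟨n, hn⟩ := hxI
  rw [← map_pow, IsLocalization.mem_map_algebraMap_iff P.primeCompl] at hn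
  obtain ⟨⟨⟨a, ha⟩, t⟩, hat⟩ := hn
  rw [← map_mul, IsLocalization.eq_iff_exists P.primeCompl] at hat
  obtain ⟨c, hc⟩ := hat
  have hcta : c * t * x ^ n ∈ I := by
    rw [show (c * t * x ^ n : R) = c * a by rw [← hc]; ring]
    exact I.mul_mem_left _ ha
  refine ⟨c * t, P.primeCompl.mul_mem c.2 t.2, n + 1, ?_⟩
  rw [show (c * t * x) ^ (n + 1) = (c * t) ^ n * x * (c * t * x ^ n) by ring]
  exact I.mul_mem_left _ hcta

def IsCompatible (φ : R → R) (J : Ideal R) : Prop :=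
  ∀ x ∈ J, φ x ∈ J

namespace IsCompatible

variable {q : ℕ} {φ : R → R} {J : Ideal R}

theorem mem_of_pow_mem (hlin : ∀ r x : R, φ (r ^ q * x) = r * φ x)
    (hsurj : Function.Surjective φ) (hJ : J.IsCompatible φ) {x : R} (hx : x ^ q ∈ J) : x ∈ J := by
  obtain ⟨c, hc⟩ := hsurj 1
  have hφ : φ (x ^ q * c) = x := by rw [hlin, hc, mul_one]
  exact hφ ▸ hJ _ (J.mul_mem_right c hx)

theorem isRadical (hq : 1 < q) (hlin : ∀ r x : R, φ (r ^ q * x) = r * φ x)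
    (hsurj : Function.Surjective φ) (hJ : J.IsCompatible φ) : J.IsRadical :=
  (isRadical_iff_pow_one_lt q hq).2 fun _ ↦ hJ.mem_of_pow_mem hlin hsurj

theorem of_mem_minimalPrimes (hq : 1 < q) (hlin : ∀ r x : R, φ (r ^ q * x) = r * φ x)
    (hsurj : Function.Surjective φ) (hJ : J.IsCompatible φ) {P : Ideal R}
    (hP : P ∈ J.minimalPrimes) : P.IsCompatible φ := by
  intro x hx
  obtain ⟨s, hsP, hsx⟩ := exists_notMem_mul_mem_radical_of_mem_minimalPrimes hP hx
  rw [(hJ.isRadical hq hlin hsurj).radical] at hsx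
  have hsqx : s ^ q * x ∈ J := by
    rw [← Nat.sub_add_cancel hq.le, pow_succ, mul_assoc]
    exact J.mul_mem_left _ hsx
  have hsφx : s * φ x ∈ P := hP.le (hlin s x ▸ hJ _ hsqx)
  exact (hP.isPrime.mem_or_mem hsφx).resolve_left hsP

end IsCompatible

end Ideal

theorem stmt_3_general {R : Type*} [CommRing R]
    (p : ℕ) (hp : p.Prime)
    (e : ℕ) (he : 1 ≤ e)
    (φ : R → R)
    (hlin : ∀ r x : R, φ (r ^ p ^ e * x) = r * φ x)
    (hsurj : Function.Surjective φ)
    (J : Ideal R) (hJ : ∀ x ∈ J, φ x ∈ J)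
    (P : Ideal R) (hP : P ∈ J.minimalPrimes) :
    ∀ x ∈ P, φ x ∈ P :=
  Ideal.IsCompatible.of_mem_minimalPrimes (Nat.one_lt_pow (by omega) hp.one_lt) hlin hsurj hJ hP

/-- If `J` is compatible with a surjective `R`-linear map `φ : F^e_* R → R`,
then so is every minimal prime over `J`. -/
theorem stmt_3 {R : Type*} [CommRing R] [IsNoetherianRing R]
    (p : ℕ) (hp : p.Prime) [CharP R p]
    (e : ℕ) (he : 1 ≤ e)
    (φ : R → R)
    (hadd : ∀ x y : R, φ (x + y) = φ x + φ y)
    (hlin : ∀ r x : R, φ (r ^ p ^ e * x) = r * φ x)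
    (hsurj : Function.Surjective φ)
    (J : Ideal R) (hJ : ∀ x ∈ J, φ x ∈ J)
    (P : Ideal R) (hP : P ∈ J.minimalPrimes) :
    ∀ x ∈ P, φ x ∈ P :=
  stmt_3_general p hp e he φ hlin hsurj J hJ P hP
end

section
/- Let R be a Noetherian commutative ring of prime characteristic p, let e ≥ 1, let φ : F^e_* R → R be a surjective R-linear map, let t ≥ 1, and let φ^t : F^{te}_* R → R be the t-fold composite of φ. Then an ideal J ⊆ R is φ-compatible if and only if it is φ^t-compatible, i.e., φ(F^e_* J) ⊆ J if and only if φ^t(F^{te}_* J) ⊆ J. -/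
/-! Since `φ c = 1` for some `c`, every `x ∈ J` is `φ (x ^ p ^ e * c)` with `x ^ p ^ e * c ∈ J`,
so `φ` maps `J` onto itself. Hence `J` lies in the image of `J` under any iterate `φ^[n]`, and
`φ x = φ^[n + 1] y ∈ J` whenever `x = φ^[n] y` with `y ∈ J`. -/

theorem Set.mapsTo_iff_mapsTo_iterate_of_surjOn {α : Type*} {f : α → α} {s : Set α}
    (hf : SurjOn f s s) {n : ℕ} (hn : n ≠ 0) : MapsTo f s s ↔ MapsTo f^[n] s s := by
  refine ⟨fun h => h.iterate n, fun h x hx => ?_⟩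
  obtain ⟨m, rfl⟩ := Nat.exists_eq_succ_of_ne_zero hn
  obtain ⟨y, hy, rfl⟩ := hf.iterate m hx
  simpa only [← Function.iterate_succ_apply' f] using h hy

theorem Ideal.surjOn_of_surjective_of_map_pow_mul {R : Type*} [CommSemiring R] {φ : R → R}
    {q : ℕ} (hq : q ≠ 0) (hlin : ∀ r x : R, φ (r ^ q * x) = r * φ x)
    (hsurj : Function.Surjective φ) (J : Ideal R) : Set.SurjOn φ J J := by
  obtain ⟨c, hc⟩ := hsurj 1
  intro x hx
  exact ⟨x ^ q * c, J.mul_mem_right c (J.pow_mem_of_mem hx q (Nat.pos_of_ne_zero hq)),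
    by rw [hlin, hc, mul_one]⟩

theorem stmt_4_general {R : Type*} [CommRing R]
    (p : ℕ) (hp : p.Prime)
    (e : ℕ)
    (φ : R → R)
    (hlin : ∀ r x : R, φ (r ^ p ^ e * x) = r * φ x)
    (hsurj : Function.Surjective φ)
    (t : ℕ) (ht : 1 ≤ t)
    (J : Ideal R) :
    (∀ x ∈ J, φ x ∈ J) ↔ (∀ x ∈ J, φ^[t] x ∈ J) :=
  Set.mapsTo_iff_mapsTo_iterate_of_surjOn
    (Ideal.surjOn_of_surjective_of_map_pow_mul (pow_ne_zero e hp.ne_zero) hlin hsurj J)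
    (Nat.one_le_iff_ne_zero.mp ht)

/-- For surjective `φ : F^e_* R → R`, an ideal is `φ`-compatible iff it is
`φ^t`-compatible (where `φ^t = φ ∘ ⋯ ∘ φ`, `t` times). -/
theorem stmt_4 {R : Type*} [CommRing R] [IsNoetherianRing R]
    (p : ℕ) (hp : p.Prime) [CharP R p]
    (e : ℕ) (he : 1 ≤ e)
    (φ : R → R)
    (hadd : ∀ x y : R, φ (x + y) = φ x + φ y)
    (hlin : ∀ r x : R, φ (r ^ p ^ e * x) = r * φ x)
    (hsurj : Function.Surjective φ)
    (t : ℕ) (ht : 1 ≤ t)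
    (J : Ideal R) :
    (∀ x ∈ J, φ x ∈ J) ↔ (∀ x ∈ J, φ^[t] x ∈ J) :=
  stmt_4_general p hp e φ hlin hsurj t ht J
end

section
/- Let R be a Noetherian commutative ring of prime characteristic p, let e ≥ 1, let φ : F^e_* R → R be a surjective R-linear map, and let a ⊆ R be any ideal. For t ≥ 0 let φ^t(F^{te}_* a) denote the ideal {φ^t(F^{te}_* x) : x ∈ a} of R (which is an ideal of R since a is an ideal). Then: (i) a ⊆ φ(F^e_* a); (ii) the ascending chain a ⊆ φ(F^e_* a) ⊆ φ^2(F^{2e}_* a) ⊆ ⋯ stabilizes at some ideal C; and (iii) C is the unique smallest φ-compatible ideal of R containing a, i.e., φ(F^e_* C) ⊆ C, a ⊆ C, and C ⊆ J for every φ-compatible ideal J containing a. -/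
/-!
The image `φ(F^e_* I)` of an ideal `I` is again an ideal, so `I ↦ φ(F^e_* I)` is a monotone
operator on the ideals of `R`. Surjectivity gives `x = x φ(u) = φ(x^{p^e} u)` for `φ(u) = 1`,
so the operator is inflationary and the chain of iterates on `a` ascends; by Noetherianity it
stabilizes at some `C` with `φ(F^e_* C) = C`. A compatible ideal `J ⊇ a` is mapped into itself,
hence contains every iterate, in particular `C`.
-/

namespace Monotone

variable {α : Type*} [PartialOrder α] {f : α → α} {x : α}

theorem exists_iterate_eq_of_le_map [WellFoundedGT α] (hf : Monotone f) (hx : x ≤ f x) :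
    ∃ n, ∀ m, n ≤ m → f^[m] x = f^[n] x := by
  obtain ⟨n, hn⟩ :=
    WellFoundedGT.monotone_chain_condition ⟨fun n => f^[n] x, hf.monotone_iterate_of_le_map hx⟩
  exact ⟨n, fun m hm => (hn m hm).symm⟩

theorem iterate_le_of_le_of_map_le (hf : Monotone f) {y : α} (hxy : x ≤ y) (hy : f y ≤ y)
    (n : ℕ) : f^[n] x ≤ y :=
  (hf.iterate n hxy).trans (hf.antitone_iterate_of_map_le hy (Nat.zero_le n))

end Monotone

namespace Ideal

variable {R : Type*} [CommRing R] {q : ℕ} {φ : R → R}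

/-- The ideal `φ(F^e_* I)`, with `q = p ^ e`. -/
def imageOfPowLinear (hadd : ∀ x y : R, φ (x + y) = φ x + φ y)
    (hlin : ∀ r x : R, φ (r ^ q * x) = r * φ x) (I : Ideal R) : Ideal R where
  carrier := φ '' I
  add_mem' := by
    rintro _ _ ⟨v, hv, rfl⟩ ⟨w, hw, rfl⟩
    exact ⟨v + w, I.add_mem hv hw, hadd v w⟩
  zero_mem' := ⟨0, I.zero_mem, by simpa using hadd 0 0⟩
  smul_mem' := by
    rintro r _ ⟨v, hv, rfl⟩
    exact ⟨r ^ q * v, I.mul_mem_left _ hv, hlin r v⟩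

variable (hadd : ∀ x y : R, φ (x + y) = φ x + φ y) (hlin : ∀ r x : R, φ (r ^ q * x) = r * φ x)

@[simp]
theorem coe_imageOfPowLinear (I : Ideal R) :
    (imageOfPowLinear hadd hlin I : Set R) = φ '' I :=
  rfl

theorem coe_iterate_imageOfPowLinear (I : Ideal R) (t : ℕ) :
    ((imageOfPowLinear hadd hlin)^[t] I : Set R) = φ^[t] '' I := by
  induction t with
  | zero => simp
  | succ t ih =>
    rw [Function.iterate_succ_apply', coe_imageOfPowLinear, ih, Function.iterate_succ',
      Set.image_comp]

theorem imageOfPowLinear_mono : Monotone (imageOfPowLinear hadd hlin) :=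
  fun _ _ hIJ => Set.image_mono hIJ

theorem le_imageOfPowLinear (hq : q ≠ 0) (hsurj : Function.Surjective φ) (I : Ideal R) :
    I ≤ imageOfPowLinear hadd hlin I := by
  obtain ⟨u, hu⟩ := hsurj 1
  intro x hx
  refine ⟨x ^ q * u, I.mul_mem_right u (I.pow_mem_of_mem hx q (Nat.pos_of_ne_zero hq)), ?_⟩
  rw [hlin, hu, mul_one]

theorem imageOfPowLinear_le_iff (J : Ideal R) :
    imageOfPowLinear hadd hlin J ≤ J ↔ ∀ x ∈ J, φ x ∈ J :=
  Set.image_subset_iff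

end Ideal

theorem stmt_5_general {R : Type*} [CommRing R] [IsNoetherianRing R]
    (p : ℕ) (hp : p.Prime)
    (e : ℕ)
    (φ : R → R)
    (hadd : ∀ x y : R, φ (x + y) = φ x + φ y)
    (hlin : ∀ r x : R, φ (r ^ p ^ e * x) = r * φ x)
    (hsurj : Function.Surjective φ)
    (a : Ideal R) :
    (a : Set R) ⊆ φ '' (a : Set R) ∧
    (∀ t : ℕ, φ^[t] '' (a : Set R) ⊆ φ^[t + 1] '' (a : Set R)) ∧
    ∃ (C : Ideal R) (t₀ : ℕ),
      (∀ t : ℕ, t₀ ≤ t → φ^[t] '' (a : Set R) = (C : Set R)) ∧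
      (∀ x ∈ C, φ x ∈ C) ∧
      a ≤ C ∧
      (∀ J : Ideal R, (∀ x ∈ J, φ x ∈ J) → a ≤ J → C ≤ J) := by
  set Φ := Ideal.imageOfPowLinear hadd hlin
  have hΦ : Monotone Φ := Ideal.imageOfPowLinear_mono hadd hlin
  have hcoe := Ideal.coe_iterate_imageOfPowLinear hadd hlin a
  have ha : a ≤ Φ a := Ideal.le_imageOfPowLinear hadd hlin (pow_ne_zero e hp.ne_zero) hsurj a
  have hchain : Monotone fun t => Φ^[t] a := hΦ.monotone_iterate_of_le_map ha
  obtain ⟨t₀, hstab⟩ := hΦ.exists_iterate_eq_of_le_map ha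
  refine ⟨ha, fun t => ?_, Φ^[t₀] a, t₀, fun t ht => ?_, ?_, hchain (Nat.zero_le t₀), ?_⟩
  · rw [← hcoe, ← hcoe, SetLike.coe_subset_coe]
    exact hchain (Nat.le_succ t)
  · rw [← hcoe, hstab t ht]
  · rw [← Ideal.imageOfPowLinear_le_iff hadd hlin]
    change Φ (Φ^[t₀] a) ≤ _
    rw [← Function.iterate_succ_apply' Φ, hstab (t₀ + 1) (Nat.le_succ t₀)]
  · intro J hJ haJ
    exact hΦ.iterate_le_of_le_of_map_le haJ ((Ideal.imageOfPowLinear_le_iff hadd hlin J).2 hJ) t₀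

/-- For surjective `φ : F^e_* R → R` and any ideal `a`, the chain
`a ⊆ φ(a) ⊆ φ²(a) ⊆ ⋯` ascends and stabilizes at the smallest
`φ`-compatible ideal containing `a`. -/
theorem stmt_5 {R : Type*} [CommRing R] [IsNoetherianRing R]
    (p : ℕ) (hp : p.Prime) [CharP R p]
    (e : ℕ) (he : 1 ≤ e)
    (φ : R → R)
    (hadd : ∀ x y : R, φ (x + y) = φ x + φ y)
    (hlin : ∀ r x : R, φ (r ^ p ^ e * x) = r * φ x)
    (hsurj : Function.Surjective φ)
    (a : Ideal R) :
    (a : Set R) ⊆ φ '' (a : Set R) ∧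
    (∀ t : ℕ, φ^[t] '' (a : Set R) ⊆ φ^[t + 1] '' (a : Set R)) ∧
    ∃ (C : Ideal R) (t₀ : ℕ),
      (∀ t : ℕ, t₀ ≤ t → φ^[t] '' (a : Set R) = (C : Set R)) ∧
      (∀ x ∈ C, φ x ∈ C) ∧
      a ≤ C ∧
      (∀ J : Ideal R, (∀ x ∈ J, φ x ∈ J) → a ≤ J → C ≤ J) :=
  stmt_5_general p hp e φ hadd hlin hsurj a
end

section
/- Let k be a perfect field of characteristic p > 0, S = k[x_1,…,x_n], e ≥ 1, I ⊆ S an ideal, R = S/I, and π : S → R the canonical surjection. Then for every R-linear map ψ : F^e_* R → R there exists an S-linear map φ : F^e_* S → S such that φ(F^e_* I) ⊆ I and π(φ(F^e_* s)) = ψ(F^e_* π(s)) for all s ∈ S. -/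
/-!
Since `k` is perfect, `S = k[x₁, …, xₙ]` is free over `S^q` on the monomials `x^a` with
`0 ≤ aᵢ < q`: every `s` is uniquely `∑ₐ s_a ^ q * x^a`, where the coefficient of `s_a` at `m` is
the `q`-th root of that of `s` at `q • m + a`. So `s ↦ s_a` is additive, and uniqueness of the
expansion gives `(s ^ q * x)_a = s * x_a`. Choosing lifts `c_a` of `ψ (x^a)`, the map `φ s = ∑ₐ s_a * c_a` is
`S`-linear and lifts `ψ`, hence `φ x ≡ ψ 0 = 0 (mod I)` for `x ∈ I`.
-/

open MvPolynomial

namespace Finsupp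

variable {σ : Type*} {q : ℕ}

theorem smul_add_eq_smul_add_iff {m m' a b : σ →₀ ℕ} (ha : ∀ i, a i < q) (hb : ∀ i, b i < q) :
    q • m + a = q • m' + b ↔ m = m' ∧ a = b := by
  refine ⟨fun h => ?_, fun ⟨hm, hab⟩ => hm ▸ hab ▸ rfl⟩
  have hi (i : σ) : q * m i + a i = q * m' i + b i := by simpa using DFunLike.congr_fun h i
  have hdivmod {x r : ℕ} (hr : r < q) : (q * x + r) / q = x ∧ (q * x + r) % q = r :=
    (Nat.div_mod_unique (Nat.zero_lt_of_lt hr)).2 ⟨add_comm _ _, hr⟩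
  constructor <;> ext i
  · rw [← (hdivmod (x := m i) (ha i)).1, hi, (hdivmod (hb i)).1]
  · rw [← (hdivmod (x := m i) (ha i)).2, hi, (hdivmod (hb i)).2]

theorem exists_eq_smul_add (hq : 0 < q) (v : σ →₀ ℕ) :
    ∃ m a : σ →₀ ℕ, (∀ i, a i < q) ∧ v = q • m + a :=
  ⟨v.mapRange (· / q) (Nat.zero_div q), v.mapRange (· % q) (Nat.zero_mod q),
    fun i => Nat.mod_lt _ hq, by ext i; simp [Nat.div_add_mod]⟩

open Classical in
noncomputable def residues [Fintype σ] (q : ℕ) : Finset (σ →₀ ℕ) :=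
  (Fintype.piFinset fun _ => Finset.range q).map equivFunOnFinite.symm.toEmbedding

theorem mem_residues [Fintype σ] {a : σ →₀ ℕ} : a ∈ residues q ↔ ∀ i, a i < q := by
  simp [residues, Finset.mem_map_equiv]

end Finsupp

section PerfectRing

variable {k : Type*} [CommSemiring k] {p : ℕ} [ExpChar k p] [PerfectRing k p] {e : ℕ}

theorem iterateFrobeniusEquiv_symm_pow (c : k) :
    (iterateFrobeniusEquiv k p e).symm (c ^ p ^ e) = c :=
  (iterateFrobeniusEquiv k p e).symm_apply_apply c

theorem pow_iterateFrobeniusEquiv_symm (c : k) :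
    (iterateFrobeniusEquiv k p e).symm c ^ p ^ e = c :=
  (iterateFrobeniusEquiv k p e).apply_symm_apply c

end PerfectRing

namespace MvPolynomial

variable {k σ : Type*} [CommSemiring k] (p e : ℕ) [ExpChar k p] [PerfectRing k p]

noncomputable def frobeniusComponent (a : σ →₀ ℕ) : MvPolynomial σ k →+ MvPolynomial σ k :=
  AddMonoidAlgebra.coeffAddEquiv.symm.toAddMonoidHom.comp <|
    (Finsupp.mapRange.addMonoidHom (iterateFrobeniusEquiv k p e).symm.toAddMonoidHom).comp <|
      (Finsupp.comapDomain.addMonoidHom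
        ((add_left_injective a).comp (smul_right_injective _ (expChar_pow_pos k p e).ne'))).comp
      AddMonoidAlgebra.coeffAddEquiv.toAddMonoidHom

theorem coeff_frobeniusComponent (a m : σ →₀ ℕ) (s : MvPolynomial σ k) :
    coeff m (frobeniusComponent p e a s) =
      (iterateFrobeniusEquiv k p e).symm (coeff (p ^ e • m + a) s) :=
  rfl

variable {p e}

section
variable [DecidableEq σ]

theorem frobeniusComponent_monomial {a b : σ →₀ ℕ} (ha : ∀ i, a i < p ^ e)
    (hb : ∀ i, b i < p ^ e) (m : σ →₀ ℕ) (c : k) :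
    frobeniusComponent p e b (monomial (p ^ e • m + a) c) =
      if a = b then monomial m ((iterateFrobeniusEquiv k p e).symm c) else 0 := by
  ext m'
  simp only [coeff_frobeniusComponent, coeff_monomial, Finsupp.smul_add_eq_smul_add_iff ha hb]
  by_cases hab : a = b
  · subst hab
    simp only [and_true, if_true, coeff_monomial]
    split_ifs <;> simp
  · simp [hab]

theorem frobeniusComponent_pow_mul_monomial {a b : σ →₀ ℕ} (ha : ∀ i, a i < p ^ e)
    (hb : ∀ i, b i < p ^ e) (w : MvPolynomial σ k) :
    frobeniusComponent p e b (w ^ p ^ e * monomial a 1) = if a = b then w else 0 := by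
  induction w using MvPolynomial.induction_on' with
  | monomial m c =>
    rw [monomial_pow, monomial_mul, mul_one, frobeniusComponent_monomial ha hb,
      iterateFrobeniusEquiv_symm_pow]
  | add w₁ w₂ h₁ h₂ =>
    rw [add_pow_expChar_pow, add_mul, map_add, h₁, h₂]
    split_ifs <;> simp

end

theorem sum_frobeniusComponent_pow_mul_monomial [Fintype σ] (s : MvPolynomial σ k) :
    ∑ a ∈ Finsupp.residues (p ^ e), frobeniusComponent p e a s ^ p ^ e * monomial a 1 = s := by
  induction s using MvPolynomial.induction_on' with
  | monomial v c =>
    classical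
    obtain ⟨m, b, hb, rfl⟩ := Finsupp.exists_eq_smul_add (expChar_pow_pos k p e) v
    rw [Finset.sum_eq_single_of_mem b (Finsupp.mem_residues.2 hb)]
    · rw [frobeniusComponent_monomial hb hb, if_pos rfl, monomial_pow, monomial_mul, mul_one,
        pow_iterateFrobeniusEquiv_symm]
    · intro a ha hab
      rw [frobeniusComponent_monomial hb (Finsupp.mem_residues.1 ha), if_neg (Ne.symm hab),
        zero_pow (expChar_pow_pos k p e).ne', zero_mul]
  | add s₁ s₂ h₁ h₂ =>
    simp only [map_add, add_pow_expChar_pow, add_mul, Finset.sum_add_distrib, h₁, h₂]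

theorem frobeniusComponent_pow_mul [Fintype σ] {b : σ →₀ ℕ} (hb : ∀ i, b i < p ^ e)
    (s x : MvPolynomial σ k) :
    frobeniusComponent p e b (s ^ p ^ e * x) = s * frobeniusComponent p e b x := by
  classical
  conv_lhs => rw [← sum_frobeniusComponent_pow_mul_monomial (p := p) (e := e) x]
  simp only [Finset.mul_sum, map_sum, ← mul_assoc, ← mul_pow]
  rw [Finset.sum_eq_single_of_mem b (Finsupp.mem_residues.2 hb)]
  · rw [frobeniusComponent_pow_mul_monomial hb hb, if_pos rfl]
  · intro a ha hab
    rw [frobeniusComponent_pow_mul_monomial (Finsupp.mem_residues.1 ha) hb, if_neg hab]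

end MvPolynomial

theorem exists_lift_of_sum_pow_mul_eq {S ι : Type*} [CommRing S] (q : ℕ) (t : Finset ι)
    (b : ι → S) (D : ι → S →+ S) (hD : ∀ i ∈ t, ∀ s x, D i (s ^ q * x) = s * D i x)
    (hsum : ∀ s, ∑ i ∈ t, D i s ^ q * b i = s) (I : Ideal S) (ψ : S ⧸ I →+ S ⧸ I)
    (hψ : ∀ r x, ψ (r ^ q * x) = r * ψ x) :
    ∃ φ : S →+ S, (∀ s x, φ (s ^ q * x) = s * φ x) ∧ (∀ x ∈ I, φ x ∈ I) ∧
      ∀ s, Ideal.Quotient.mk I (φ s) = ψ (Ideal.Quotient.mk I s) := by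
  choose c hc using fun i => Ideal.Quotient.mk_surjective (ψ (Ideal.Quotient.mk I (b i)))
  let φ : S →+ S := ∑ i ∈ t, (AddMonoidHom.mulRight (c i)).comp (D i)
  have hφ (s : S) : φ s = ∑ i ∈ t, D i s * c i := by simp [φ]
  have hlift (s : S) : Ideal.Quotient.mk I (φ s) = ψ (Ideal.Quotient.mk I s) := calc
    Ideal.Quotient.mk I (φ s) =
        ∑ i ∈ t, Ideal.Quotient.mk I (D i s) * ψ (Ideal.Quotient.mk I (b i)) := by
      simp [hφ, hc]
    _ = ∑ i ∈ t, ψ (Ideal.Quotient.mk I (D i s ^ q * b i)) := by simp [hψ]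
    _ = ψ (Ideal.Quotient.mk I s) := by rw [← map_sum, ← map_sum, hsum]
  refine ⟨φ, fun s x => ?_, fun x hx => ?_, hlift⟩
  · rw [hφ, hφ, Finset.mul_sum]
    exact Finset.sum_congr rfl fun i hi => by rw [hD i hi, mul_assoc]
  · rw [← Ideal.Quotient.eq_zero_iff_mem, hlift, Ideal.Quotient.eq_zero_iff_mem.2 hx, map_zero]

theorem stmt_6_general {k : Type*} [Field k] (p : ℕ) (hp : p.Prime) [CharP k p]
    [PerfectField k]
    (n e : ℕ)
    (I : Ideal (MvPolynomial (Fin n) k))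
    (ψ : MvPolynomial (Fin n) k ⧸ I → MvPolynomial (Fin n) k ⧸ I)
    (hadd : ∀ x y, ψ (x + y) = ψ x + ψ y)
    (hlin : ∀ r x, ψ (r ^ p ^ e * x) = r * ψ x) :
    ∃ φ : MvPolynomial (Fin n) k → MvPolynomial (Fin n) k,
      (∀ x y, φ (x + y) = φ x + φ y) ∧
      (∀ s x, φ (s ^ p ^ e * x) = s * φ x) ∧
      (∀ x ∈ I, φ x ∈ I) ∧
      (∀ s, Ideal.Quotient.mk I (φ s) = ψ (Ideal.Quotient.mk I s)) := by
  have : ExpChar k p := ExpChar.prime hp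
  obtain ⟨φ, hφ, hI, hlift⟩ := exists_lift_of_sum_pow_mul_eq (p ^ e) (Finsupp.residues (p ^ e))
    (fun a => monomial a 1) (frobeniusComponent p e)
    (fun _ ha => frobeniusComponent_pow_mul (Finsupp.mem_residues.1 ha))
    sum_frobeniusComponent_pow_mul_monomial I (AddMonoidHom.mk' ψ hadd) hlin
  exact ⟨φ, map_add φ, hφ, hI, hlift⟩

/-- Fedder's Lemma, part (a): every `R`-linear map `F^e_* R → R` on
`R = S/I` lifts to an `S`-linear map `F^e_* S → S` compatible with `I`. -/
theorem stmt_6 {k : Type*} [Field k] (p : ℕ) (hp : p.Prime) [CharP k p]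
    [PerfectField k]
    (n e : ℕ) (he : 1 ≤ e)
    (I : Ideal (MvPolynomial (Fin n) k))
    (ψ : MvPolynomial (Fin n) k ⧸ I → MvPolynomial (Fin n) k ⧸ I)
    (hadd : ∀ x y, ψ (x + y) = ψ x + ψ y)
    (hlin : ∀ r x, ψ (r ^ p ^ e * x) = r * ψ x) :
    ∃ φ : MvPolynomial (Fin n) k → MvPolynomial (Fin n) k,
      (∀ x y, φ (x + y) = φ x + φ y) ∧
      (∀ s x, φ (s ^ p ^ e * x) = s * φ x) ∧
      (∀ x ∈ I, φ x ∈ I) ∧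
      (∀ s, Ideal.Quotient.mk I (φ s) = ψ (Ideal.Quotient.mk I s)) :=
  stmt_6_general p hp n e I ψ hadd hlin
end

section
/- Let k be a perfect field of characteristic p > 0, S = k[x_1,…,x_n], e ≥ 1, I ⊆ S an ideal, and let φ : F^e_* S → S be an S-linear map with φ(F^e_* I) ⊆ I such that the induced map φ/I : F^e_*(S/I) → S/I is surjective. Then there exists an S-linear map ψ : F^e_* S → S such that: (i) ψ(F^e_* 1) = 1 (ψ is a Frobenius splitting of S); and (ii) for every ideal J' ⊆ S with I ⊆ J' and φ(F^e_* J') ⊆ J', one also has ψ(F^e_* J') ⊆ J'. -/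
/-!
Surjectivity of `φ/I` gives `u` with `φ(u) ≡ 1 (mod I)`; then `ψ(x) = φ(u x) - (φ(u) - 1) Φ(x)`, with `Φ` the standard
splitting of the polynomial ring, is a Frobenius splitting: `ψ(1) = φ(u) - (φ(u) - 1) = 1`.
Any `φ`-compatible `J' ⊇ I` is `ψ`-compatible, because `φ(u x) ∈ J'` for `x ∈ J'` and the
correction term is a multiple of `φ(u) - 1 ∈ I ⊆ J'`.
-/

open MvPolynomial

section Splitting

variable {R : Type*} [CommRing R]

theorem exists_frobenius_splitting_compatible_of_surjective (q : ℕ) (I : Ideal R)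
    (φ Φ : R → R) (hφadd : ∀ x y, φ (x + y) = φ x + φ y)
    (hφlin : ∀ s x, φ (s ^ q * x) = s * φ x) (hΦadd : ∀ x y, Φ (x + y) = Φ x + Φ y)
    (hΦlin : ∀ s x, Φ (s ^ q * x) = s * Φ x) (hΦone : Φ 1 = 1)
    (hsurj : Function.Surjective fun s => Ideal.Quotient.mk I (φ s)) :
    ∃ ψ : R → R,
      (∀ x y, ψ (x + y) = ψ x + ψ y) ∧
      (∀ s x, ψ (s ^ q * x) = s * ψ x) ∧
      ψ 1 = 1 ∧
      (∀ J : Ideal R, I ≤ J → (∀ x ∈ J, φ x ∈ J) → ∀ x ∈ J, ψ x ∈ J) := by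
  obtain ⟨u, hu⟩ := hsurj 1
  have hu : φ u - 1 ∈ I := Ideal.Quotient.eq.mp (by simpa using hu)
  refine ⟨fun x => φ (u * x) - (φ u - 1) * Φ x, fun x y => ?_, fun s x => ?_, ?_, ?_⟩ <;>
    dsimp only
  · simp only [mul_add, hφadd, hΦadd]
    ring
  · rw [mul_left_comm u, hφlin, hΦlin]
    ring
  · simp only [mul_one, hΦone, sub_sub_cancel]
  · intro J hIJ hJ x hx
    exact sub_mem (hJ _ (J.mul_mem_left u hx)) (J.mul_mem_right _ (hIJ hu))

end Splitting

namespace MvPolynomial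

variable {σ R : Type*} [CommRing R] (p e : ℕ) [ExpChar R p] [PerfectRing R p]

-- The trace map `x^γ a ↦ x^(γ/q) a^(1/q)` if `q = p^e` divides every exponent, `0` otherwise.
open Classical in
noncomputable def frobeniusTrace : MvPolynomial σ R →+ MvPolynomial σ R :=
  (Finsupp.liftAddHom fun γ : σ →₀ ℕ =>
    if ∀ i, p ^ e ∣ γ i then
      (monomial (γ.mapRange (· / p ^ e) (Nat.zero_div _))).toAddMonoidHom.comp
        ((iterateFrobeniusEquiv R p e).symm : R →+* R).toAddMonoidHom
    else 0).comp AddMonoidAlgebra.coeffAddEquiv.toAddMonoidHom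

open Classical in
theorem frobeniusTrace_monomial (γ : σ →₀ ℕ) (a : R) :
    frobeniusTrace p e (monomial γ a) =
      if ∀ i, p ^ e ∣ γ i then
        monomial (γ.mapRange (· / p ^ e) (Nat.zero_div _)) ((iterateFrobeniusEquiv R p e).symm a)
      else 0 := by
  rw [← single_eq_monomial, frobeniusTrace]
  erw [Finsupp.liftAddHom_apply_single]
  split_ifs <;> simp

theorem frobeniusTrace_one : frobeniusTrace p e (1 : MvPolynomial σ R) = 1 := by
  rw [← C_1, C_apply, frobeniusTrace_monomial, if_pos fun i => by simp]
  simp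

theorem frobeniusTrace_monomial_pow_mul (β : σ →₀ ℕ) (c : R) (α : σ →₀ ℕ) (d : R) :
    frobeniusTrace p e (monomial β c ^ p ^ e * monomial α d) =
      monomial β c * frobeniusTrace p e (monomial α d) := by
  rw [monomial_pow, monomial_mul, frobeniusTrace_monomial, frobeniusTrace_monomial]
  have hdvd : ∀ i, p ^ e ∣ (p ^ e • β + α) i ↔ p ^ e ∣ α i := fun i =>
    Nat.dvd_add_right ⟨β i, rfl⟩
  by_cases h : ∀ i, p ^ e ∣ α i
  · have hexp : (p ^ e • β + α).mapRange (· / p ^ e) (Nat.zero_div _) =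
        β + α.mapRange (· / p ^ e) (Nat.zero_div _) := by
      ext i
      simp [Nat.mul_add_div (expChar_pow_pos R p e)]
    have hcoeff : (iterateFrobeniusEquiv R p e).symm (c ^ p ^ e * d) =
        c * (iterateFrobeniusEquiv R p e).symm d := by
      rw [map_mul, ← iterateFrobeniusEquiv_def, RingEquiv.symm_apply_apply]
    rw [if_pos fun i => (hdvd i).mpr (h i), if_pos h, hexp, hcoeff, monomial_mul]
  · rw [if_neg fun h' : ∀ i, _ => h fun i => (hdvd i).mp (h' i), if_neg h, mul_zero]

theorem frobeniusTrace_pow_mul (s x : MvPolynomial σ R) :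
    frobeniusTrace p e (s ^ p ^ e * x) = s * frobeniusTrace p e x := by
  induction s using MvPolynomial.induction_on' generalizing x with
  | add s t hs ht => rw [add_pow_expChar_pow, add_mul, map_add, hs, ht, add_mul]
  | monomial β c =>
    induction x using MvPolynomial.induction_on' with
    | add x y hx hy => rw [mul_add, map_add, hx, hy, map_add, mul_add]
    | monomial α d => exact frobeniusTrace_monomial_pow_mul p e β c α d

end MvPolynomial

theorem stmt_12_general {k : Type*} [Field k] (p : ℕ) (hp : p.Prime) [CharP k p]
    [PerfectField k]
    (n e : ℕ)
    (I : Ideal (MvPolynomial (Fin n) k))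
    (φ : MvPolynomial (Fin n) k → MvPolynomial (Fin n) k)
    (hadd : ∀ x y, φ (x + y) = φ x + φ y)
    (hlin : ∀ s x, φ (s ^ p ^ e * x) = s * φ x)
    (hsurj : Function.Surjective
      (fun s : MvPolynomial (Fin n) k => Ideal.Quotient.mk I (φ s))) :
    ∃ ψ : MvPolynomial (Fin n) k → MvPolynomial (Fin n) k,
      (∀ x y, ψ (x + y) = ψ x + ψ y) ∧
      (∀ s x, ψ (s ^ p ^ e * x) = s * ψ x) ∧
      ψ 1 = 1 ∧
      (∀ J' : Ideal (MvPolynomial (Fin n) k),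
        I ≤ J' → (∀ x ∈ J', φ x ∈ J') → ∀ x ∈ J', ψ x ∈ J') := by
  have := Fact.mk hp
  exact exists_frobenius_splitting_compatible_of_surjective (p ^ e) I φ (frobeniusTrace p e)
    hadd hlin (map_add _) (frobeniusTrace_pow_mul p e) (frobeniusTrace_one p e) hsurj

/-- If `φ : F^e_* S → S` is compatible with `I` and the induced map on
`S/I` is surjective, then there is a Frobenius splitting `ψ` of `S`
compatible with every `φ`-compatible ideal containing `I`. -/
theorem stmt_12 {k : Type*} [Field k] (p : ℕ) (hp : p.Prime) [CharP k p]
    [PerfectField k]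
    (n e : ℕ) (he : 1 ≤ e)
    (I : Ideal (MvPolynomial (Fin n) k))
    (φ : MvPolynomial (Fin n) k → MvPolynomial (Fin n) k)
    (hadd : ∀ x y, φ (x + y) = φ x + φ y)
    (hlin : ∀ s x, φ (s ^ p ^ e * x) = s * φ x)
    (hI : ∀ x ∈ I, φ x ∈ I)
    (hsurj : Function.Surjective
      (fun s : MvPolynomial (Fin n) k => Ideal.Quotient.mk I (φ s))) :
    ∃ ψ : MvPolynomial (Fin n) k → MvPolynomial (Fin n) k,
      (∀ x y, ψ (x + y) = ψ x + ψ y) ∧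
      (∀ s x, ψ (s ^ p ^ e * x) = s * ψ x) ∧
      ψ 1 = 1 ∧
      (∀ J' : Ideal (MvPolynomial (Fin n) k),
        I ≤ J' → (∀ x ∈ J', φ x ∈ J') → ∀ x ∈ J', ψ x ∈ J') :=
  stmt_12_general p hp n e I φ hadd hlin hsurj
end

section
/- Let k be a perfect field of characteristic p > 0, S = k[x_1,…,x_n], e ≥ 1, q = p^e, and I ⊆ S an ideal. Let ψ : F^e_* S → S be an S-linear map. Then ψ(F^e_* I) ⊆ I if and only if there exists c ∈ (I^{[q]} : I) such that ψ(F^e_* s) = Φ_S(F^e_*(c·s)) for all s ∈ S. -/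
/-!
Over a perfect ring every polynomial can be written as `∑ α, t_α ^ q * x^α` with `0 ≤ α_i < q`,
so a `q`-semilinear map is determined by its values on these monomials, and `Φ` pairs
`x^(q-1-α)` with `x^β` to `δ_{αβ}`. Hence `ψ = Φ (c * ·)` for `c = ∑ α, ψ(x^α) ^ q * x^(q-1-α)`,
and reading off `t_α = Φ (x^(q-1-α) * v)` gives `I^[q] = {v | ∀ w, Φ (w * v) ∈ I}`.
So `ψ(I) = Φ(c I) ⊆ I` exactly when `c I ⊆ I^[q]`.
-/

/-- The `q`-th Frobenius power `I^{[q]}` of an ideal: the ideal generated by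
the `q`-th powers of the elements of `I`. -/
def frobPow {S : Type*} [CommRing S] (q : ℕ) (A : Ideal S) : Ideal S :=
  Ideal.span ((fun f => f ^ q) '' (A : Set S))

open MvPolynomial

/-- An `R`-linear map `F^e_* R → R` (where `q = p ^ e`), with `F^e_* R` identified with `R` as a
set, so that `s` acts on it by multiplication by `s ^ q`. -/
structure IsFrobeniusSemilinear {R : Type*} [CommRing R] (q : ℕ) (ψ : R → R) : Prop where
  map_add : ∀ x y, ψ (x + y) = ψ x + ψ y
  map_pow_mul : ∀ s x, ψ (s ^ q * x) = s * ψ x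

namespace IsFrobeniusSemilinear

variable {R : Type*} [CommRing R] {q : ℕ} {ψ : R → R}

theorem map_zero (hψ : IsFrobeniusSemilinear q ψ) : ψ 0 = 0 := by
  simpa using hψ.map_add 0 0

theorem map_sum (hψ : IsFrobeniusSemilinear q ψ) {ι : Type*} (s : Finset ι) (f : ι → R) :
    ψ (∑ i ∈ s, f i) = ∑ i ∈ s, ψ (f i) :=
  _root_.map_sum (AddMonoidHom.mk' ψ hψ.map_add) f s

theorem comp_mul_left (hψ : IsFrobeniusSemilinear q ψ) (c : R) :
    IsFrobeniusSemilinear q (fun s => ψ (c * s)) where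
  map_add x y := by rw [mul_add, hψ.map_add]
  map_pow_mul s x := by rw [mul_left_comm, hψ.map_pow_mul]

theorem apply_mul_mem_of_mem_frobPow (hψ : IsFrobeniusSemilinear q ψ) {I : Ideal R} {v : R}
    (hv : v ∈ frobPow q I) (w : R) : ψ (w * v) ∈ I := by
  induction hv using Submodule.span_induction generalizing w with
  | mem x hx =>
    obtain ⟨g, hg, rfl⟩ := hx
    rw [mul_comm, hψ.map_pow_mul]
    exact I.mul_mem_right _ hg
  | zero => rw [mul_zero, hψ.map_zero]; exact I.zero_mem
  | add x y _ _ hx hy => rw [mul_add, hψ.map_add]; exact I.add_mem (hx w) (hy w)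
  | smul a x _ hx => rw [smul_eq_mul, ← mul_assoc]; exact hx (w * a)

end IsFrobeniusSemilinear

theorem Nat.sub_one_sub_add_mod_eq_sub_one_iff {q a b : ℕ} (ha : a < q) (hb : b < q) :
    (q - 1 - a + b) % q = q - 1 ↔ a = b := by
  rcases le_or_gt b a with hba | hab
  · rw [Nat.mod_eq_of_lt (by omega)]
    omega
  · rw [show q - 1 - a + b = b - a - 1 + q by omega, Nat.add_mod_right,
      Nat.mod_eq_of_lt (by omega)]
    omega

section MvPolynomial

variable {σ k : Type*} [Fintype σ] [CommRing k]

theorem MvPolynomial.exists_eq_sum_pow_mul_prod_X_pow [DecidableEq σ] (p e : ℕ) [ExpChar k p]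
    [PerfectRing k p] (s : MvPolynomial σ k) :
    ∃ t : (σ → Fin (p ^ e)) → MvPolynomial σ k,
      s = ∑ α, t α ^ p ^ e * ∏ i, X i ^ (α i : ℕ) := by
  have hq : 0 < p ^ e := pow_pos (expChar_pos k p) e
  induction s using MvPolynomial.induction_on' with
  | monomial m a =>
    obtain ⟨b, hb⟩ := (bijective_iterateFrobenius k p e).2 a
    rw [iterateFrobenius_def] at hb
    let β : σ → Fin (p ^ e) := fun i => ⟨m i % p ^ e, Nat.mod_lt _ hq⟩
    refine ⟨Pi.single β (C b * ∏ i, X i ^ (m i / p ^ e)), ?_⟩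
    rw [Finset.sum_eq_single β (fun α _ hα => by simp [hα, zero_pow hq.ne'])
      (fun h => absurd (Finset.mem_univ β) h), Pi.single_eq_same, mul_pow, ← C_pow, hb,
      ← Finset.prod_pow, mul_assoc, ← Finset.prod_mul_distrib, monomial_eq,
      Finsupp.prod_fintype _ _ fun i => pow_zero _]
    congr 1
    refine Finset.prod_congr rfl fun i _ => ?_
    rw [← pow_mul, ← pow_add, Nat.div_add_mod']
  | add f g hf hg =>
    obtain ⟨t, rfl⟩ := hf
    obtain ⟨u, rfl⟩ := hg
    refine ⟨t + u, ?_⟩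
    simp only [Pi.add_apply, add_pow_expChar_pow, add_mul, Finset.sum_add_distrib]

theorem IsFrobeniusSemilinear.ext_prod_X_pow [DecidableEq σ] (p e : ℕ) [ExpChar k p]
    [PerfectRing k p] {ψ χ : MvPolynomial σ k → MvPolynomial σ k}
    (hψ : IsFrobeniusSemilinear (p ^ e) ψ) (hχ : IsFrobeniusSemilinear (p ^ e) χ)
    (h : ∀ α : σ → Fin (p ^ e), ψ (∏ i, X i ^ (α i : ℕ)) = χ (∏ i, X i ^ (α i : ℕ))) :
    ψ = χ := by
  funext s
  obtain ⟨t, rfl⟩ := exists_eq_sum_pow_mul_prod_X_pow p e s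
  simp only [hψ.map_sum, hχ.map_sum, hψ.map_pow_mul, hχ.map_pow_mul, h]

/-- The generator `Φ_S` of `Hom_S(F^e_* S, S)`. -/
structure IsFrobeniusTrace (q : ℕ) (Φ : MvPolynomial σ k → MvPolynomial σ k) : Prop
    extends IsFrobeniusSemilinear q Φ where
  map_prod_X_pow : ∀ α : σ → Fin q,
    Φ (∏ i, X i ^ (α i : ℕ)) = if ∀ i, (α i : ℕ) = q - 1 then 1 else 0

namespace IsFrobeniusTrace

variable {q : ℕ} {Φ : MvPolynomial σ k → MvPolynomial σ k}

theorem apply_prod_X_pow (hq : 0 < q) (hΦ : IsFrobeniusTrace q Φ) (m : σ → ℕ) :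
    Φ (∏ i, X i ^ m i) = if ∀ i, m i % q = q - 1 then ∏ i, X i ^ (m i / q) else 0 := by
  have hsplit : ∏ i, (X i : MvPolynomial σ k) ^ m i
      = (∏ i, X i ^ (m i / q)) ^ q * ∏ i, X i ^ (m i % q) := by
    rw [← Finset.prod_pow, ← Finset.prod_mul_distrib]
    refine Finset.prod_congr rfl fun i _ => ?_
    rw [← pow_mul, ← pow_add, Nat.div_add_mod']
  rw [hsplit, hΦ.map_pow_mul, hΦ.map_prod_X_pow fun i => ⟨m i % q, Nat.mod_lt _ hq⟩]
  split_ifs <;> simp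

theorem apply_prod_X_pow_sub_one_sub_mul_prod_X_pow [DecidableEq σ] (hq : 0 < q)
    (hΦ : IsFrobeniusTrace q Φ) (α β : σ → Fin q) :
    Φ ((∏ i, X i ^ (q - 1 - α i)) * ∏ i, X i ^ (β i : ℕ)) = if α = β then 1 else 0 := by
  rw [← Finset.prod_mul_distrib]
  simp only [← pow_add]
  rw [hΦ.apply_prod_X_pow hq]
  by_cases h : α = β
  · subst h
    have hdiv : ∀ i, (q - 1 - α i + α i) / q = 0 := fun i =>
      Nat.div_eq_of_lt (by have := (α i).isLt; omega)
    simp [hdiv, Nat.sub_one_sub_add_mod_eq_sub_one_iff]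
  · rw [if_neg h, if_neg]
    refine fun hall => h (funext fun i => Fin.ext ?_)
    exact (Nat.sub_one_sub_add_mod_eq_sub_one_iff (α i).isLt (β i).isLt).1 (hall i)

variable [DecidableEq σ] (p e : ℕ) [ExpChar k p] [PerfectRing k p]

theorem exists_eq_apply_mul (hΦ : IsFrobeniusTrace (p ^ e) Φ)
    {ψ : MvPolynomial σ k → MvPolynomial σ k} (hψ : IsFrobeniusSemilinear (p ^ e) ψ) :
    ∃ c, ∀ s, ψ s = Φ (c * s) := by
  have hq : 0 < p ^ e := pow_pos (expChar_pos k p) e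
  let c := ∑ α : σ → Fin (p ^ e), ψ (∏ i, X i ^ (α i : ℕ)) ^ p ^ e * ∏ i, X i ^ (p ^ e - 1 - α i)
  refine ⟨c, congrFun (hψ.ext_prod_X_pow p e (hΦ.comp_mul_left c) fun β => ?_)⟩
  simp only [c, Finset.sum_mul, mul_assoc, hΦ.map_sum, hΦ.map_pow_mul,
    hΦ.apply_prod_X_pow_sub_one_sub_mul_prod_X_pow hq]
  simp

theorem mem_frobPow_iff (hΦ : IsFrobeniusTrace (p ^ e) Φ) {I : Ideal (MvPolynomial σ k)}
    {v : MvPolynomial σ k} : v ∈ frobPow (p ^ e) I ↔ ∀ w, Φ (w * v) ∈ I := by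
  have hq : 0 < p ^ e := pow_pos (expChar_pos k p) e
  refine ⟨hΦ.apply_mul_mem_of_mem_frobPow, fun h => ?_⟩
  obtain ⟨t, rfl⟩ := exists_eq_sum_pow_mul_prod_X_pow p e v
  have ht : ∀ α, t α ∈ I := fun α => by
    simpa [Finset.mul_sum, mul_left_comm _ (t _ ^ _), hΦ.map_sum, hΦ.map_pow_mul,
      hΦ.apply_prod_X_pow_sub_one_sub_mul_prod_X_pow hq] using h (∏ i, X i ^ (p ^ e - 1 - α i))
  exact Ideal.sum_mem _ fun α _ => Ideal.mul_mem_right _ _ (Ideal.subset_span ⟨t α, ht α, rfl⟩)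

end IsFrobeniusTrace

end MvPolynomial

theorem stmt_13_general {k : Type*} [Field k] (p : ℕ) (hp : p.Prime) [CharP k p]
    [PerfectField k]
    (n e : ℕ)
    (Φ : MvPolynomial (Fin n) k → MvPolynomial (Fin n) k)
    (hΦadd : ∀ f g, Φ (f + g) = Φ f + Φ g)
    (hΦlin : ∀ s f, Φ (s ^ p ^ e * f) = s * Φ f)
    (hΦbasis : ∀ α : Fin n → Fin (p ^ e),
      Φ (∏ i : Fin n, X i ^ (α i : ℕ)) =
        if ∀ i, (α i : ℕ) = p ^ e - 1 then 1 else 0)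
    (I : Ideal (MvPolynomial (Fin n) k))
    (ψ : MvPolynomial (Fin n) k → MvPolynomial (Fin n) k)
    (hadd : ∀ x y, ψ (x + y) = ψ x + ψ y)
    (hlin : ∀ s x, ψ (s ^ p ^ e * x) = s * ψ x) :
    (∀ x ∈ I, ψ x ∈ I) ↔
      ∃ c ∈ Submodule.colon (frobPow (p ^ e) I) I,
        ∀ s, ψ s = Φ (c * s) := by
  have := Fact.mk hp
  have hΦ : IsFrobeniusTrace (p ^ e) Φ := ⟨⟨hΦadd, hΦlin⟩, fun α => by convert hΦbasis α⟩
  obtain ⟨c, hψc⟩ := hΦ.exists_eq_apply_mul p e ⟨hadd, hlin⟩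
  constructor
  · refine fun hI => ⟨c, Submodule.mem_colon.2 fun f hf => ?_, hψc⟩
    rw [smul_eq_mul, hΦ.mem_frobPow_iff p e]
    intro w
    rw [mul_left_comm, ← hψc]
    exact hI _ (I.mul_mem_left w hf)
  · rintro ⟨c, hc, hψc⟩ x hx
    rw [hψc, ← one_mul (c * x)]
    exact hΦ.apply_mul_mem_of_mem_frobPow (Submodule.mem_colon.1 hc x hx) 1

/-- Fedder's Lemma, part (c): an `S`-linear map `ψ : F^e_* S → S` is
compatible with `I` iff `ψ = Φ_S(c ⬝ –)` for some `c ∈ (I^{[q]} : I)`.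
Here `Φ_S` is the generator of `Hom_S(F^e_* S, S)`, characterized by being
additive, `p^e`-semilinear, and by its values on the monomial basis. -/
theorem stmt_13 {k : Type*} [Field k] (p : ℕ) (hp : p.Prime) [CharP k p]
    [PerfectField k]
    (n e : ℕ) (he : 1 ≤ e)
    (Φ : MvPolynomial (Fin n) k → MvPolynomial (Fin n) k)
    (hΦadd : ∀ f g, Φ (f + g) = Φ f + Φ g)
    (hΦlin : ∀ s f, Φ (s ^ p ^ e * f) = s * Φ f)
    (hΦbasis : ∀ α : Fin n → Fin (p ^ e),
      Φ (∏ i : Fin n, X i ^ (α i : ℕ)) =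
        if ∀ i, (α i : ℕ) = p ^ e - 1 then 1 else 0)
    (I : Ideal (MvPolynomial (Fin n) k))
    (ψ : MvPolynomial (Fin n) k → MvPolynomial (Fin n) k)
    (hadd : ∀ x y, ψ (x + y) = ψ x + ψ y)
    (hlin : ∀ s x, ψ (s ^ p ^ e * x) = s * ψ x) :
    (∀ x ∈ I, ψ x ∈ I) ↔
      ∃ c ∈ Submodule.colon (frobPow (p ^ e) I) I,
        ∀ s, ψ s = Φ (c * s) :=
  stmt_13_general p hp n e Φ hΦadd hΦlin hΦbasis I ψ hadd hlin
end

section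
/- Let k be a perfect field of characteristic p > 0, S = k[x_1,…,x_n], e ≥ 1, and q = p^e. If J ⊆ S is an ideal with Φ_S(F^e_* J) ⊆ J, then J = 0 or J = S. In other words, the only Φ_S-compatible ideals of S are the zero ideal and the unit ideal. -/
open MvPolynomial

private lemma aux_sum_div_le {ι : Type*} (s : Finset ι) (a : ι → ℕ) {q : ℕ} (hq : 0 < q) :
    (∑ i ∈ s, a i / q) ≤ (∑ i ∈ s, a i) / q := by
  rw [Nat.le_div_iff_mul_le hq, Finset.sum_mul]
  exact Finset.sum_le_sum fun i _ => Nat.div_mul_le_self _ _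

private lemma aux_prod_X_pow {k : Type*} [CommSemiring k] {n : ℕ} (d : Fin n →₀ ℕ) :
    ∏ i : Fin n, (X i : MvPolynomial (Fin n) k) ^ d i = monomial d 1 := by
  rw [← prod_X_pow_eq_monomial]
  exact (Finset.prod_subset (Finset.subset_univ _)
    (fun x _ hx => by simp [Finsupp.notMem_support_iff.mp hx])).symm

/-- Frobenius decomposition: every `f` can be written `∑ₗ gₗ^q · xˡ` with controlled degrees. -/
private lemma aux_decomp {k : Type*} [Field k] (p : ℕ) (hp : p.Prime) [CharP k p]
    [PerfectField k] {n : ℕ} (e : ℕ) (f : MvPolynomial (Fin n) k) :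
    ∃ g : (Fin n → Fin (p ^ e)) → MvPolynomial (Fin n) k,
      (∑ l : Fin n → Fin (p ^ e), (g l) ^ p ^ e * ∏ i, X i ^ (l i : ℕ)) = f ∧
      ∀ l, (g l).totalDegree ≤ f.totalDegree / p ^ e := by
  haveI := Fact.mk hp
  have hq : 0 < p ^ e := pow_pos hp.pos e
  have root : ∀ c : k, ∃ a, a ^ p ^ e = c := fun c =>
    ⟨(iterateFrobeniusEquiv k p e).symm c, by
      have := (iterateFrobeniusEquiv k p e).apply_symm_apply c
      rwa [iterateFrobeniusEquiv_def] at this⟩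
  choose r hr using root
  refine ⟨fun l => ∑ ν ∈ f.support,
      if (fun i => (⟨ν i % p ^ e, Nat.mod_lt _ hq⟩ : Fin (p ^ e))) = l then
        monomial (ν.mapRange (· / p ^ e) (Nat.zero_div _)) (r (coeff ν f)) else 0, ?_, ?_⟩
  · have step1 : ∀ l : Fin n → Fin (p ^ e),
        (∑ ν ∈ f.support,
          if (fun i => (⟨ν i % p ^ e, Nat.mod_lt _ hq⟩ : Fin (p ^ e))) = l then
            monomial (ν.mapRange (· / p ^ e) (Nat.zero_div _)) (r (coeff ν f)) else 0) ^ p ^ e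
          * ∏ i, X i ^ (l i : ℕ)
        = ∑ ν ∈ f.support,
          (if (fun i => (⟨ν i % p ^ e, Nat.mod_lt _ hq⟩ : Fin (p ^ e))) = l then
            (monomial (ν.mapRange (· / p ^ e) (Nat.zero_div _)) (r (coeff ν f))) ^ p ^ e
              * ∏ i, X i ^ (l i : ℕ) else 0) := by
      intro l
      rw [sum_pow_char_pow (p := p) (n := e), Finset.sum_mul]
      refine Finset.sum_congr rfl fun ν _ => ?_
      split_ifs with h
      · rfl
      · simp [zero_pow hq.ne']
    rw [Finset.sum_congr rfl fun l _ => step1 l, Finset.sum_comm]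
    have step2 : ∀ ν ∈ f.support,
        (∑ l : Fin n → Fin (p ^ e),
          if (fun i => (⟨ν i % p ^ e, Nat.mod_lt _ hq⟩ : Fin (p ^ e))) = l then
            (monomial (ν.mapRange (· / p ^ e) (Nat.zero_div _)) (r (coeff ν f))) ^ p ^ e
              * ∏ i, X i ^ (l i : ℕ) else 0)
        = monomial ν (coeff ν f) := by
      intro ν _
      rw [Finset.sum_ite_eq]
      simp only [Finset.mem_univ, if_true]
      rw [monomial_pow, hr]
      have hprod : (∏ i : Fin n, (X i : MvPolynomial (Fin n) k) ^
          (((⟨ν i % p ^ e, Nat.mod_lt _ hq⟩ : Fin (p ^ e)) : ℕ)))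
          = monomial (ν.mapRange (· % p ^ e) (Nat.zero_mod _)) 1 := by
        rw [← aux_prod_X_pow]
        exact Finset.prod_congr rfl fun i _ => by rw [Finsupp.mapRange_apply]
      rw [hprod, monomial_mul, mul_one]
      have hexp : p ^ e • ν.mapRange (· / p ^ e) (Nat.zero_div _)
          + ν.mapRange (· % p ^ e) (Nat.zero_mod _) = ν := by
        ext i
        rw [Finsupp.add_apply, Finsupp.smul_apply, Finsupp.mapRange_apply,
          Finsupp.mapRange_apply, smul_eq_mul]
        exact Nat.div_add_mod (ν i) (p ^ e)
      rw [hexp]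
    rw [Finset.sum_congr rfl step2]
    exact support_sum_monomial_coeff f
  · intro l
    refine (totalDegree_finset_sum _ _).trans (Finset.sup_le fun ν hν => ?_)
    split_ifs with h
    · refine (totalDegree_monomial_le _ _).trans ?_
      have hsum : ((ν.mapRange (· / p ^ e) (Nat.zero_div _)).sum fun _ => id)
          = ∑ i : Fin n, ν i / p ^ e := by
        rw [Finsupp.sum_fintype _ _ (fun _ => rfl)]
        exact Finset.sum_congr rfl fun i _ => by rw [Finsupp.mapRange_apply]; rfl
      rw [hsum]
      refine (aux_sum_div_le _ _ hq).trans (Nat.div_le_div_right ?_)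
      have : ∑ i : Fin n, ν i = ν.sum fun _ m => m :=
        (Finsupp.sum_fintype ν (fun _ m => m) (fun _ => rfl)).symm
      rw [this]
      exact le_totalDegree hν
    · simp

/-- The only `Φ_S`-compatible ideals of `S = k[x₁,…,xₙ]` are `0` and `S`. -/
theorem stmt_15 {k : Type*} [Field k] (p : ℕ) (hp : p.Prime) [CharP k p]
    [PerfectField k]
    (n e : ℕ) (he : 1 ≤ e)
    (Φ : MvPolynomial (Fin n) k → MvPolynomial (Fin n) k)
    (hΦadd : ∀ f g, Φ (f + g) = Φ f + Φ g)
    (hΦlin : ∀ s f, Φ (s ^ p ^ e * f) = s * Φ f)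
    (hΦbasis : ∀ α : Fin n → Fin (p ^ e),
      Φ (∏ i : Fin n, X i ^ (α i : ℕ)) =
        if ∀ i, (α i : ℕ) = p ^ e - 1 then 1 else 0)
    (J : Ideal (MvPolynomial (Fin n) k)) (hJ : ∀ f ∈ J, Φ f ∈ J) :
    J = ⊥ ∨ J = ⊤ := by
  haveI := Fact.mk hp
  have hq : 0 < p ^ e := pow_pos hp.pos e
  have hq2 : 2 ≤ p ^ e := hp.two_le.trans (Nat.le_self_pow (by omega) p)
  by_cases hJbot : J = ⊥
  · exact Or.inl hJbot
  right
  -- Φ as an additive monoid hom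
  let Φh : MvPolynomial (Fin n) k →+ MvPolynomial (Fin n) k := AddMonoidHom.mk' Φ hΦadd
  have hΦh : ∀ f, Φh f = Φ f := fun _ => rfl
  -- Value of Φ on monomials with exponents ≤ 2q-2
  have key : ∀ ν : Fin n → ℕ, (∀ i, ν i ≤ 2 * p ^ e - 2) →
      Φ (∏ i, X i ^ ν i) = if ∀ i, ν i = p ^ e - 1 then 1 else 0 := by
    intro ν hν
    have hdec : (∏ i : Fin n, (X i : MvPolynomial (Fin n) k) ^ ν i)
        = (∏ i, X i ^ (ν i / p ^ e)) ^ p ^ e * ∏ i, X i ^ (ν i % p ^ e) := by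
      rw [← Finset.prod_pow, ← Finset.prod_mul_distrib]
      refine Finset.prod_congr rfl fun i _ => ?_
      rw [← pow_mul, ← pow_add, Nat.div_add_mod']
    rw [hdec, hΦlin, hΦbasis (fun i => ⟨ν i % p ^ e, Nat.mod_lt _ hq⟩)]
    simp only []
    by_cases h : ∀ i, ν i = p ^ e - 1
    · rw [if_pos h, if_pos (fun i => by
        show ν i % p ^ e = p ^ e - 1
        rw [h i]; exact Nat.mod_eq_of_lt (by omega)), mul_one]
      refine Finset.prod_eq_one fun i _ => ?_
      rw [h i, Nat.div_eq_of_lt (by omega), pow_zero]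
    · rw [if_neg h, if_neg, mul_zero]
      push_neg at h ⊢
      obtain ⟨j, hj⟩ := h
      refine ⟨j, ?_⟩
      show ν j % p ^ e ≠ p ^ e - 1
      have hb := hν j
      rcases lt_or_ge (ν j) (p ^ e) with hlt | hge
      · rw [Nat.mod_eq_of_lt hlt]; exact hj
      · rw [Nat.mod_eq_sub_mod hge, Nat.mod_eq_of_lt (by omega)]
        omega
  -- Extraction: Φ applied to suitable multiple of f recovers each g l
  have extract : ∀ (g : (Fin n → Fin (p ^ e)) → MvPolynomial (Fin n) k)
      (l₀ : Fin n → Fin (p ^ e)),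
      Φ ((∏ i, X i ^ (p ^ e - 1 - (l₀ i : ℕ))) *
        ∑ l : Fin n → Fin (p ^ e), (g l) ^ p ^ e * ∏ i, X i ^ (l i : ℕ)) = g l₀ := by
    intro g l₀
    rw [Finset.mul_sum]
    have step : ∀ l : Fin n → Fin (p ^ e),
        (∏ i : Fin n, (X i : MvPolynomial (Fin n) k) ^ (p ^ e - 1 - (l₀ i : ℕ))) *
          ((g l) ^ p ^ e * ∏ i, X i ^ (l i : ℕ))
        = (g l) ^ p ^ e * ∏ i, X i ^ ((l i : ℕ) + (p ^ e - 1 - (l₀ i : ℕ))) := by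
      intro l
      rw [mul_left_comm, ← Finset.prod_mul_distrib]
      refine congrArg _ (Finset.prod_congr rfl fun i _ => ?_)
      rw [← pow_add, Nat.add_comm]
    rw [Finset.sum_congr rfl fun l _ => step l, ← hΦh, map_sum Φh]
    have step2 : ∀ l : Fin n → Fin (p ^ e),
        Φh ((g l) ^ p ^ e * ∏ i, X i ^ ((l i : ℕ) + (p ^ e - 1 - (l₀ i : ℕ))))
        = if l = l₀ then g l else 0 := by
      intro l
      rw [hΦh, hΦlin, key _ (fun i => by have := (l i).isLt; have := (l₀ i).isLt; omega)]
      have hiff : (∀ i, (l i : ℕ) + (p ^ e - 1 - (l₀ i : ℕ)) = p ^ e - 1) ↔ l = l₀ := by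
        constructor
        · intro h
          funext i
          have h1 := h i
          have h2 := (l₀ i).isLt
          exact Fin.ext (by omega)
        · intro h
          subst h
          intro i
          have h2 := (l i).isLt
          omega
      split_ifs with h1 h2 h2
      · rw [mul_one]
      · exact absurd (hiff.mp h1) h2
      · exact absurd (hiff.mpr h2) h1
      · rw [mul_zero]
    rw [Finset.sum_congr rfl fun l _ => step2 l, Finset.sum_ite_eq' Finset.univ l₀ g,
      if_pos (Finset.mem_univ _)]
  -- main induction on total degree
  have main : ∀ d : ℕ, ∀ f ∈ J, f ≠ 0 → f.totalDegree = d → J = ⊤ := by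
    intro d
    induction d using Nat.strong_induction_on with
    | _ d ih =>
      intro f hfJ hf0 hdeg
      rcases Nat.eq_zero_or_pos d with h0 | hpos
      · -- constant case: f is a unit
        subst h0
        have hsupp : f.support ⊆ {0} := fun m hm =>
          Finset.mem_singleton.mpr
            (Finsupp.ext fun i => (totalDegree_eq_zero_iff _ f).mp hdeg m hm i)
        have hfC : f = C (coeff 0 f) := by
          rcases Finset.subset_singleton_iff.mp hsupp with h | h
          · exact absurd (support_eq_empty.mp h) hf0
          · have := support_sum_monomial_coeff f
            rw [h, Finset.sum_singleton] at this
            exact this.symm.trans C_apply.symm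
        have hc : coeff 0 f ≠ 0 := fun hc => hf0 (by rw [hfC, hc, map_zero])
        exact J.eq_top_of_isUnit_mem hfJ (hfC ▸ (IsUnit.mk0 _ hc).map C)
      · obtain ⟨g, hgsum, hgdeg⟩ := aux_decomp p hp e f
        have hex : ∃ l, g l ≠ 0 := by
          by_contra hall
          push_neg at hall
          apply hf0
          rw [← hgsum]
          exact Finset.sum_eq_zero fun l _ => by rw [hall l, zero_pow hq.ne', zero_mul]
        obtain ⟨l, hl⟩ := hex
        have hmem : g l ∈ J := by
          have h1 := extract g l
          rw [hgsum] at h1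
          exact h1 ▸ hJ _ (J.mul_mem_left _ hfJ)
        refine ih (g l).totalDegree ?_ (g l) hmem hl rfl
        calc (g l).totalDegree ≤ f.totalDegree / p ^ e := hgdeg l
          _ ≤ d / p ^ e := by rw [hdeg]
          _ < d := Nat.div_lt_self hpos hq2
  obtain ⟨f, hfJ, hf0⟩ := (Submodule.ne_bot_iff J).mp hJbot
  exact main f.totalDegree f hfJ hf0 rfl
end

section
/- Let k be a perfect field of characteristic p > 0, S = k[x_1,…,x_n], e ≥ 1, q = p^e, and f ∈ S. If Φ_S(F^e_* f) ≠ 0, then q·totalDegree(Φ_S(F^e_* f)) + (q−1)·n ≤ totalDegree(f). -/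
/-!
Write a term of `f` as `c x^μ` with `c = d^q` (k is perfect) and divide `μ` by `q` coordinatewise:
`c x^μ = (d x^⌊μ/q⌋)^q · x^(μ mod q)`. Hence `Φ` kills the term unless every remainder is `q - 1`,
in which case it sends it to `d x^⌊μ/q⌋`, whose degree satisfies `q · deg + (q - 1) n = |μ|`.
By additivity, `Φ f` is a sum of such images, so its degree is bounded by that of the terms of `f`.
-/

open MvPolynomial

section

variable {R σ : Type*} [CommSemiring R] [Fintype σ]

lemma prod_univ_X_pow_eq_monomial (a : σ → ℕ) :
    ∏ i, (X i : MvPolynomial σ R) ^ a i = monomial (Finsupp.equivFunOnFinite.symm a) 1 := by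
  rw [monomial_eq, C_1, one_mul, Finsupp.prod_fintype _ _ fun _ => pow_zero _]
  rfl

lemma monomial_pow_eq_pow_mul_prod_X_pow (q : ℕ) (μ : σ →₀ ℕ) (d : R) :
    monomial μ (d ^ q) =
      monomial (μ.mapRange (· / q) (Nat.zero_div q)) d ^ q * ∏ i, X i ^ (μ i % q) := by
  rw [prod_univ_X_pow_eq_monomial, monomial_pow, monomial_mul, mul_one]
  congr 2
  ext i
  simp only [Finsupp.add_apply, Finsupp.smul_apply, smul_eq_mul, Finsupp.mapRange_apply]
  exact (Nat.div_add_mod _ _).symm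

end

section

variable {k : Type*} [Field k] {n q : ℕ} (Φ : MvPolynomial (Fin n) k → MvPolynomial (Fin n) k)

lemma apply_monomial_pow (hΦlin : ∀ s f, Φ (s ^ q * f) = s * Φ f)
    (hΦbasis : ∀ α : Fin n → Fin q,
      Φ (∏ i : Fin n, X i ^ (α i : ℕ)) = if ∀ i, (α i : ℕ) = q - 1 then 1 else 0)
    (hq : 0 < q) (μ : Fin n →₀ ℕ) (d : k) :
    Φ (monomial μ (d ^ q)) =
      if ∀ i, μ i % q = q - 1 then monomial (μ.mapRange (· / q) (Nat.zero_div q)) d else 0 := by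
  rw [monomial_pow_eq_pow_mul_prod_X_pow, hΦlin,
    hΦbasis fun i => ⟨μ i % q, Nat.mod_lt _ hq⟩]
  split_ifs <;> simp

lemma totalDegree_apply_monomial_pow (hΦlin : ∀ s f, Φ (s ^ q * f) = s * Φ f)
    (hΦbasis : ∀ α : Fin n → Fin q,
      Φ (∏ i : Fin n, X i ^ (α i : ℕ)) = if ∀ i, (α i : ℕ) = q - 1 then 1 else 0)
    (hq : 0 < q) (μ : Fin n →₀ ℕ) (d : k) (h : Φ (monomial μ (d ^ q)) ≠ 0) :
    q * (Φ (monomial μ (d ^ q))).totalDegree + (q - 1) * n = μ.sum fun _ e => e := by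
  rw [apply_monomial_pow Φ hΦlin hΦbasis hq] at h ⊢
  split_ifs at h ⊢ with hmod
  · have hd : d ≠ 0 := by rintro rfl; simp at h
    have hconst : (q - 1) * n = ∑ _i : Fin n, (q - 1) := by simp [mul_comm]
    rw [totalDegree_monomial _ hd, Finsupp.sum_fintype _ _ fun _ => rfl,
      Finsupp.sum_fintype _ _ fun _ => rfl, Finset.mul_sum, hconst, ← Finset.sum_add_distrib]
    refine Finset.sum_congr rfl fun i _ => ?_
    rw [Finsupp.mapRange_apply, ← hmod i, Nat.div_add_mod]
  · exact absurd rfl h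

end

theorem stmt_16_general {k : Type*} [Field k] (p : ℕ) (hp : p.Prime) [CharP k p]
    [PerfectField k]
    (n e : ℕ)
    (Φ : MvPolynomial (Fin n) k → MvPolynomial (Fin n) k)
    (hΦadd : ∀ f g, Φ (f + g) = Φ f + Φ g)
    (hΦlin : ∀ s f, Φ (s ^ p ^ e * f) = s * Φ f)
    (hΦbasis : ∀ α : Fin n → Fin (p ^ e),
      Φ (∏ i : Fin n, X i ^ (α i : ℕ)) =
        if ∀ i, (α i : ℕ) = p ^ e - 1 then 1 else 0)
    (f : MvPolynomial (Fin n) k) (hf : Φ f ≠ 0) :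
    p ^ e * (Φ f).totalDegree + (p ^ e - 1) * n ≤ f.totalDegree := by
  have : ExpChar k p := .prime hp
  have hq : 0 < p ^ e := pow_pos hp.pos e
  set term := fun μ => Φ (monomial μ (coeff μ f))
  have hsum : Φ f = ∑ μ ∈ f.support, term μ := by
    conv_lhs => rw [← support_sum_monomial_coeff f]
    exact map_sum (AddMonoidHom.mk' Φ hΦadd) _ _
  have hterm : ∀ μ ∈ f.support, term μ ≠ 0 →
      p ^ e * (term μ).totalDegree + (p ^ e - 1) * n ≤ f.totalDegree := by
    intro μ hμ hne
    obtain ⟨d, hd⟩ := (bijective_iterateFrobenius k p e).surjective (coeff μ f)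
    simp only [term, ← hd, iterateFrobenius_def] at hne ⊢
    exact (totalDegree_apply_monomial_pow Φ hΦlin hΦbasis hq μ d hne).trans_le
      (le_totalDegree hμ)
  obtain ⟨μ, hμ, hne⟩ : ∃ μ ∈ f.support, term μ ≠ 0 := by
    by_contra! h
    exact hf (hsum ▸ Finset.sum_eq_zero h)
  have hdeg : (Φ f).totalDegree ≤ (f.totalDegree - (p ^ e - 1) * n) / p ^ e := by
    rw [hsum]
    refine totalDegree_finsetSum_le fun ν hν => ?_
    by_cases h0 : term ν = 0
    · simp [h0]
    · rw [Nat.le_div_iff_mul_le hq, mul_comm]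
      have := hterm ν hν h0
      omega
  have := hterm μ hμ hne
  calc p ^ e * (Φ f).totalDegree + (p ^ e - 1) * n
      ≤ p ^ e * ((f.totalDegree - (p ^ e - 1) * n) / p ^ e) + (p ^ e - 1) * n := by gcongr
    _ ≤ f.totalDegree - (p ^ e - 1) * n + (p ^ e - 1) * n := by gcongr; exact Nat.mul_div_le _ _
    _ = f.totalDegree := by omega

/-- Degree bound: if `Φ_S(F^e_* f) ≠ 0` then
`q·deg(Φ_S(F^e_* f)) + (q−1)·n ≤ deg f`, `q = p^e`. -/
theorem stmt_16 {k : Type*} [Field k] (p : ℕ) (hp : p.Prime) [CharP k p]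
    [PerfectField k]
    (n e : ℕ) (he : 1 ≤ e)
    (Φ : MvPolynomial (Fin n) k → MvPolynomial (Fin n) k)
    (hΦadd : ∀ f g, Φ (f + g) = Φ f + Φ g)
    (hΦlin : ∀ s f, Φ (s ^ p ^ e * f) = s * Φ f)
    (hΦbasis : ∀ α : Fin n → Fin (p ^ e),
      Φ (∏ i : Fin n, X i ^ (α i : ℕ)) =
        if ∀ i, (α i : ℕ) = p ^ e - 1 then 1 else 0)
    (f : MvPolynomial (Fin n) k) (hf : Φ f ≠ 0) :
    p ^ e * (Φ f).totalDegree + (p ^ e - 1) * n ≤ f.totalDegree :=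
  stmt_16_general p hp n e Φ hΦadd hΦlin hΦbasis f hf
end

section
/- Let k be a perfect field of characteristic p > 0, S = k[x_1,…,x_n], e ≥ 1, q = p^e, let z ∈ S with totalDegree(z) ≤ D, and let a ⊆ S be an ideal generated by polynomials of total degree at most d. Define ideals recursively by J_0 = a and J_{t+1} = the ideal generated by {Φ_S(F^e_* x) : x ∈ z·J_t}. Then for every t ≥ 1, the ideal J_t is generated by polynomials of total degree at most ⌊((1 + q + q^2 + ⋯ + q^{t−1})·D + d)/q^t⌋. -/
/-!
Write each monomial `c x^u` of a polynomial `a` as `(r x^⌊u/q⌋)^q · x^(u mod q)` with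
`r^q = c` (perfectness). Since `Φ` is additive and `q`-semilinear, `Φ(a w)` then lies in the
ideal generated by the `Φ(x^α w)` with `0 ≤ α_i < q`; hence `Φ(F^e_* z·J)` is generated by the
`Φ(x^α z g)` for generators `g` of `J`. Moreover `Φ(x^u)` vanishes unless every
`u_i ≡ q - 1 (mod q)`, in which case it is `x^⌊u/q⌋`, and the exponents `α_i ≤ q - 1` are
absorbed by these residues, so `deg Φ(x^α z g) ≤ ⌊deg(z g)/q⌋ ≤ ⌊(D + m)/q⌋`. Iterating, with
`⌊⌊x⌋/q⌋ = ⌊x/q⌋`, gives the bound.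
-/

open MvPolynomial Finset

lemma Nat.add_div_mul_le_of_add_mod_eq_pred {a b q : ℕ} (ha : a < q) (h : (a + b) % q = q - 1) :
    (a + b) / q * q ≤ b := by
  have := Nat.div_add_mod (a + b) q
  rw [mul_comm] at this
  omega

lemma Nat.add_geom_sum_mul_add_div_pow_div {q : ℕ} (hq : 0 < q) (D d t : ℕ) :
    (D + ((∑ i ∈ range t, q ^ i) * D + d) / q ^ t) / q =
      ((∑ i ∈ range (t + 1), q ^ i) * D + d) / q ^ (t + 1) := by
  rw [add_comm D, ← Nat.add_mul_div_right _ _ (pow_pos hq t), Nat.div_div_eq_div_mul, ← pow_succ,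
    sum_range_succ]
  congr 1
  ring

namespace MvPolynomial

variable {σ k : Type*} [Fintype σ] [CommSemiring k]

lemma monomial_eq_C_mul_prod_X_pow (u : σ →₀ ℕ) (c : k) :
    monomial u c = C c * ∏ i, X i ^ u i := by
  rw [monomial_eq, Finsupp.prod_fintype _ _ fun i => pow_zero _]

lemma totalDegree_prod_X_pow_le (m : σ → ℕ) :
    (∏ i, X i ^ m i : MvPolynomial σ k).totalDegree ≤ ∑ i, m i := by
  refine (totalDegree_finsetProd _ _).trans (sum_le_sum fun i _ => ?_)
  rw [X_pow_eq_monomial]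
  exact (totalDegree_monomial_le _ _).trans_eq (Finsupp.sum_single_index rfl)

lemma C_pow_mul_prod_X_pow (q : ℕ) (r : k) (u : σ → ℕ) :
    C (r ^ q) * ∏ i, X i ^ u i =
      (C r * ∏ i, X i ^ (u i / q)) ^ q * ∏ i, X i ^ (u i % q) := by
  simp_rw [mul_pow, C_pow, ← prod_pow, ← pow_mul, mul_assoc, ← prod_mul_distrib, ← pow_add,
    mul_comm _ q, Nat.div_add_mod]

section SemilinearMap

variable {q : ℕ} (Φ : MvPolynomial σ k →+ MvPolynomial σ k)

lemma map_C_pow_mul_prod_X_pow_mul (hΦ : ∀ s f, Φ (s ^ q * f) = s * Φ f) (r : k) (u : σ → ℕ)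
    (w : MvPolynomial σ k) :
    Φ (C (r ^ q) * (∏ i, X i ^ u i) * w) =
      C r * (∏ i, X i ^ (u i / q)) * Φ ((∏ i, X i ^ (u i % q)) * w) := by
  rw [C_pow_mul_prod_X_pow q, mul_assoc, hΦ]

lemma map_mul_mem_of_forall_map_prod_X_pow_mul_mem (hq : 0 < q)
    (hΦ : ∀ s f, Φ (s ^ q * f) = s * Φ f) (hroot : ∀ c : k, ∃ r, r ^ q = c)
    {K : Ideal (MvPolynomial σ k)} {w : MvPolynomial σ k}
    (hw : ∀ α : σ → Fin q, Φ ((∏ i, X i ^ (α i : ℕ)) * w) ∈ K) (a : MvPolynomial σ k) :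
    Φ (a * w) ∈ K := by
  induction a using MvPolynomial.induction_on' with
  | monomial u c =>
    obtain ⟨r, rfl⟩ := hroot c
    rw [monomial_eq_C_mul_prod_X_pow, map_C_pow_mul_prod_X_pow_mul Φ hΦ]
    exact K.mul_mem_left _ (hw fun i => ⟨u i % q, Nat.mod_lt _ hq⟩)
  | add f g hf hg =>
    rw [add_mul, map_add]
    exact K.add_mem hf hg

lemma map_mem_of_mem_span (hq : 0 < q) (hΦ : ∀ s f, Φ (s ^ q * f) = s * Φ f)
    (hroot : ∀ c : k, ∃ r, r ^ q = c) {K : Ideal (MvPolynomial σ k)}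
    {G : Set (MvPolynomial σ k)}
    (hG : ∀ g ∈ G, ∀ α : σ → Fin q, Φ ((∏ i, X i ^ (α i : ℕ)) * g) ∈ K)
    {f : MvPolynomial σ k} (hf : f ∈ Ideal.span G) : Φ f ∈ K := by
  suffices ∀ b, Φ (b * f) ∈ K by simpa using this 1
  induction hf using Submodule.span_induction with
  | mem g hg => exact map_mul_mem_of_forall_map_prod_X_pow_mul_mem Φ hq hΦ hroot (hG g hg)
  | zero => simp
  | add x y _ _ hx hy =>
    intro b
    rw [mul_add, map_add]
    exact K.add_mem (hx b) (hy b)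
  | smul c x _ hx =>
    intro b
    rw [smul_eq_mul, ← mul_assoc]
    exact hx _

lemma span_image_span_eq_span_image2 (hq : 0 < q) (hΦ : ∀ s f, Φ (s ^ q * f) = s * Φ f)
    (hroot : ∀ c : k, ∃ r, r ^ q = c) (G : Set (MvPolynomial σ k)) :
    Ideal.span (Φ '' (Ideal.span G : Set (MvPolynomial σ k))) =
      Ideal.span (Set.image2 (fun (α : σ → Fin q) g => Φ ((∏ i, X i ^ (α i : ℕ)) * g))
        Set.univ G) := by
  apply le_antisymm
  · rw [Ideal.span_le]
    rintro _ ⟨f, hf, rfl⟩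
    refine map_mem_of_mem_span Φ hq hΦ hroot (fun g hg α => ?_) hf
    exact Ideal.subset_span ⟨α, Set.mem_univ α, g, hg, rfl⟩
  · rw [Ideal.span_le]
    rintro _ ⟨α, -, g, hg, rfl⟩
    exact Ideal.subset_span ⟨_, Ideal.mul_mem_left _ _ (Ideal.subset_span hg), rfl⟩

lemma totalDegree_map_prod_X_pow_mul_monomial_le (hq : 0 < q)
    (hΦ : ∀ s f, Φ (s ^ q * f) = s * Φ f) (hroot : ∀ c : k, ∃ r, r ^ q = c)
    (hΦbasis : ∀ α : σ → Fin q,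
      Φ (∏ i, X i ^ (α i : ℕ)) = if ∀ i, (α i : ℕ) = q - 1 then 1 else 0)
    (α : σ → Fin q) (δ : σ →₀ ℕ) (c : k) :
    (Φ ((∏ i, X i ^ (α i : ℕ)) * monomial δ c)).totalDegree ≤ (∑ i, δ i) / q := by
  obtain ⟨r, rfl⟩ := hroot c
  have hprod : (∏ i, X i ^ (α i : ℕ)) * monomial δ (r ^ q) =
      C (r ^ q) * (∏ i, X i ^ ((α i : ℕ) + δ i)) * 1 := by
    simp_rw [monomial_eq_C_mul_prod_X_pow, pow_add, prod_mul_distrib]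
    ring
  rw [hprod, map_C_pow_mul_prod_X_pow_mul Φ hΦ, mul_one,
    hΦbasis fun i => ⟨((α i : ℕ) + δ i) % q, Nat.mod_lt _ hq⟩]
  split_ifs with hres
  · rw [mul_one]
    calc _ ≤ 0 + ∑ i, ((α i : ℕ) + δ i) / q :=
          (totalDegree_mul _ _).trans (add_le_add (totalDegree_C r).le
            (totalDegree_prod_X_pow_le _))
      _ ≤ (∑ i, δ i) / q := by
          rw [zero_add, Nat.le_div_iff_mul_le hq, sum_mul]
          exact sum_le_sum fun i _ => Nat.add_div_mul_le_of_add_mod_eq_pred (α i).isLt (hres i)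
  · simp

lemma totalDegree_map_prod_X_pow_mul_le (hq : 0 < q)
    (hΦ : ∀ s f, Φ (s ^ q * f) = s * Φ f) (hroot : ∀ c : k, ∃ r, r ^ q = c)
    (hΦbasis : ∀ α : σ → Fin q,
      Φ (∏ i, X i ^ (α i : ℕ)) = if ∀ i, (α i : ℕ) = q - 1 then 1 else 0)
    (α : σ → Fin q) (w : MvPolynomial σ k) :
    (Φ ((∏ i, X i ^ (α i : ℕ)) * w)).totalDegree ≤ w.totalDegree / q := by
  conv_lhs => rw [← support_sum_monomial_coeff w, mul_sum, map_sum]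
  refine (totalDegree_finsetSum _ _).trans (Finset.sup_le fun δ hδ => ?_)
  refine (totalDegree_map_prod_X_pow_mul_monomial_le Φ hq hΦ hroot hΦbasis α δ _).trans ?_
  exact Nat.div_le_div_right
    ((le_totalDegree hδ).trans_eq' (Finsupp.sum_fintype _ _ fun _ => rfl))

end SemilinearMap

end MvPolynomial

namespace Ideal

lemma image_mul_left_span {R : Type*} [CommSemiring R] (z : R) (G : Set R) :
    (z * ·) '' (Ideal.span G : Set R) = Ideal.span ((z * ·) '' G) := by
  have := Submodule.span_image (LinearMap.mulLeft R z) (s := G)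
  exact (Submodule.map_coe _ _).symm.trans (congrArg SetLike.coe this.symm)

variable {σ k : Type*} [Fintype σ] [CommSemiring k]

def IsGeneratedInTotalDegreeLE (I : Ideal (MvPolynomial σ k)) (m : ℕ) : Prop :=
  ∃ G : Set (MvPolynomial σ k), Ideal.span G = I ∧ ∀ g ∈ G, g.totalDegree ≤ m

lemma IsGeneratedInTotalDegreeLE.span_map_image_mul {q : ℕ}
    {Φ : MvPolynomial σ k →+ MvPolynomial σ k} (hq : 0 < q)
    (hΦ : ∀ s f, Φ (s ^ q * f) = s * Φ f) (hroot : ∀ c : k, ∃ r, r ^ q = c)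
    (hΦbasis : ∀ α : σ → Fin q,
      Φ (∏ i, X i ^ (α i : ℕ)) = if ∀ i, (α i : ℕ) = q - 1 then 1 else 0)
    {I : Ideal (MvPolynomial σ k)} {m : ℕ} (hI : I.IsGeneratedInTotalDegreeLE m)
    {z : MvPolynomial σ k} {D : ℕ} (hz : z.totalDegree ≤ D) :
    (Ideal.span (Φ '' ((z * ·) '' (I : Set (MvPolynomial σ k))))).IsGeneratedInTotalDegreeLE
      ((D + m) / q) := by
  obtain ⟨G, rfl, hG⟩ := hI
  rw [image_mul_left_span, span_image_span_eq_span_image2 Φ hq hΦ hroot]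
  refine ⟨_, rfl, ?_⟩
  rintro _ ⟨α, -, _, ⟨g, hg, rfl⟩, rfl⟩
  refine (totalDegree_map_prod_X_pow_mul_le Φ hq hΦ hroot hΦbasis α _).trans ?_
  exact Nat.div_le_div_right ((totalDegree_mul _ _).trans (add_le_add hz (hG g hg)))

end Ideal

theorem stmt_18_general {k : Type*} [Field k] (p : ℕ) (hp : p.Prime) [CharP k p]
    [PerfectField k]
    (n e : ℕ)
    (Φ : MvPolynomial (Fin n) k → MvPolynomial (Fin n) k)
    (hΦadd : ∀ f g, Φ (f + g) = Φ f + Φ g)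
    (hΦlin : ∀ s f, Φ (s ^ p ^ e * f) = s * Φ f)
    (hΦbasis : ∀ α : Fin n → Fin (p ^ e),
      Φ (∏ i : Fin n, X i ^ (α i : ℕ)) =
        if ∀ i, (α i : ℕ) = p ^ e - 1 then 1 else 0)
    (z : MvPolynomial (Fin n) k) (D d : ℕ) (hzD : z.totalDegree ≤ D)
    (G : Set (MvPolynomial (Fin n) k)) (hGd : ∀ g ∈ G, g.totalDegree ≤ d)
    (a : Ideal (MvPolynomial (Fin n) k)) (ha : a = Ideal.span G)
    (J : ℕ → Ideal (MvPolynomial (Fin n) k))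
    (hJ0 : J 0 = a)
    (hJs : ∀ t : ℕ, J (t + 1) =
      Ideal.span (Φ '' ((fun f => z * f) '' (J t : Set (MvPolynomial (Fin n) k))))) :
    ∀ t : ℕ, 1 ≤ t →
      ∃ G' : Set (MvPolynomial (Fin n) k),
        Ideal.span G' = J t ∧
        ∀ g ∈ G', g.totalDegree ≤
          ((∑ i ∈ Finset.range t, (p ^ e) ^ i) * D + d) / (p ^ e) ^ t := by
  have hq : 0 < p ^ e := pow_pos hp.pos e
  have : ExpChar k p := ExpChar.prime hp
  have hroot : ∀ c : k, ∃ r, r ^ p ^ e = c := (iterateFrobeniusEquiv k p e).surjective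
  have hJ : ∀ t, (J t).IsGeneratedInTotalDegreeLE
      (((∑ i ∈ range t, (p ^ e) ^ i) * D + d) / (p ^ e) ^ t) := by
    intro t
    induction t with
    | zero => simpa [hJ0, ha] using ⟨G, rfl, hGd⟩
    | succ t ih =>
      rw [hJs, ← Nat.add_geom_sum_mul_add_div_pow_div hq]
      -- `congr` reconciles the two `Decidable` instances of the `if`
      exact ih.span_map_image_mul (Φ := AddMonoidHom.mk' Φ hΦadd) hq hΦlin hroot
        (fun α => by rw [AddMonoidHom.mk'_apply, hΦbasis]; congr) hzD
  exact fun t _ => hJ t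

/-- Iterated degree bound: if `J₀ = a` is generated in degrees `≤ d`,
`deg z ≤ D`, and `J_{t+1} = ⟨Φ_S(F^e_* z·J_t)⟩`, then `J_t` is generated by
polynomials of degree at most `⌊((1 + q + ⋯ + q^{t−1})D + d)/q^t⌋`. -/
theorem stmt_18 {k : Type*} [Field k] (p : ℕ) (hp : p.Prime) [CharP k p]
    [PerfectField k]
    (n e : ℕ) (he : 1 ≤ e)
    (Φ : MvPolynomial (Fin n) k → MvPolynomial (Fin n) k)
    (hΦadd : ∀ f g, Φ (f + g) = Φ f + Φ g)
    (hΦlin : ∀ s f, Φ (s ^ p ^ e * f) = s * Φ f)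
    (hΦbasis : ∀ α : Fin n → Fin (p ^ e),
      Φ (∏ i : Fin n, X i ^ (α i : ℕ)) =
        if ∀ i, (α i : ℕ) = p ^ e - 1 then 1 else 0)
    (z : MvPolynomial (Fin n) k) (D d : ℕ) (hzD : z.totalDegree ≤ D)
    (G : Set (MvPolynomial (Fin n) k)) (hGd : ∀ g ∈ G, g.totalDegree ≤ d)
    (a : Ideal (MvPolynomial (Fin n) k)) (ha : a = Ideal.span G)
    (J : ℕ → Ideal (MvPolynomial (Fin n) k))
    (hJ0 : J 0 = a)
    (hJs : ∀ t : ℕ, J (t + 1) =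
      Ideal.span (Φ '' ((fun f => z * f) '' (J t : Set (MvPolynomial (Fin n) k))))) :
    ∀ t : ℕ, 1 ≤ t →
      ∃ G' : Set (MvPolynomial (Fin n) k),
        Ideal.span G' = J t ∧
        ∀ g ∈ G', g.totalDegree ≤
          ((∑ i ∈ Finset.range t, (p ^ e) ^ i) * D + d) / (p ^ e) ^ t :=
  stmt_18_general p hp n e Φ hΦadd hΦlin hΦbasis z D d hzD G hGd a ha J hJ0 hJs
end

section
/- Let k be a perfect field of characteristic p > 0, S = k[x_1,…,x_n], e ≥ 1, q = p^e, I ⊆ S an ideal, R = S/I, and π : S → R the canonical surjection. Let M ⊆ Hom_S(F^e_* S, S) be the F^e_* S-submodule (F^e_*(I^{[q]} : I))·Hom_S(F^e_* S, S), i.e., the set of S-linear maps of the form s ↦ Σ_i φ_i(F^e_*(c_i·s)) with c_i ∈ (I^{[q]} : I) and φ_i ∈ Hom_S(F^e_* S, S). Then: (i) every φ ∈ M satisfies φ(F^e_* I) ⊆ I, so it induces an R-linear map φ/I : F^e_* R → R; (ii) the map M → Hom_R(F^e_* R, R) sending φ to φ/I is surjective; and (iii) its kernel is the submodule (F^e_*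 I^{[q]})·Hom_S(F^e_* S, S). -/
/-- `φ` is an `S`-linear map `F^e_* S → S` (with `q = p^e`): it is additive
and satisfies `φ(s^q · x) = s · φ(x)`. -/
def IsFeLinear {S : Type*} [CommRing S] (q : ℕ) (φ : S → S) : Prop :=
  (∀ x y : S, φ (x + y) = φ x + φ y) ∧ ∀ s x : S, φ (s ^ q * x) = s * φ x

/-- `φ` lies in the `F^e_* S`-submodule `(F^e_* J) · Hom_S(F^e_* S, S)`:
it is a finite sum of maps `s ↦ ψᵢ(cᵢ · s)` with `cᵢ ∈ J` and `ψᵢ`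
`S`-linear. -/
def InFeSubmodule {S : Type*} [CommRing S] (q : ℕ) (J : Ideal S)
    (φ : S → S) : Prop :=
  ∃ (m : ℕ) (c : Fin m → S) (ψ : Fin m → S → S),
    (∀ i, c i ∈ J) ∧ (∀ i, IsFeLinear q (ψ i)) ∧
    ∀ s : S, φ s = ∑ i, ψ i (c i * s)

open MvPolynomial

namespace IsFeLinear

variable {S : Type*} [CommRing S] {q : ℕ} {φ : S → S}

def toAddMonoidHom (hφ : IsFeLinear q φ) : S →+ S := AddMonoidHom.mk' φ hφ.1

lemma map_sum (hφ : IsFeLinear q φ) {ι : Type*} (s : Finset ι) (f : ι → S) :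
    φ (∑ i ∈ s, f i) = ∑ i ∈ s, φ (f i) :=
  _root_.map_sum hφ.toAddMonoidHom f s

lemma map_mem_of_mem_frobPow (hφ : IsFeLinear q φ) {I : Ideal S} {x : S}
    (hx : x ∈ frobPow q I) : φ x ∈ I := by
  -- `frobPow q I` is spanned over `S`, not over `S ^ q`, so induct on all multiples of `x`.
  suffices ∀ r, φ (r * x) ∈ I by simpa using this 1
  induction hx using Submodule.span_induction with
  | mem y hy =>
    obtain ⟨y, hy, rfl⟩ := hy
    intro r
    rw [mul_comm, hφ.2]
    exact I.mul_mem_right _ hy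
  | zero =>
    intro r
    rw [mul_zero, show φ 0 = 0 from hφ.toAddMonoidHom.map_zero]
    exact I.zero_mem
  | add y z _ _ hy hz => intro r; rw [mul_add, hφ.1]; exact I.add_mem (hy r) (hz r)
  | smul c y _ hy => intro r; rw [smul_eq_mul, ← mul_assoc]; exact hy (r * c)

end IsFeLinear

namespace InFeSubmodule

variable {S : Type*} [CommRing S] {q : ℕ} {J : Ideal S} {φ : S → S}

lemma isFeLinear (hφ : InFeSubmodule q J φ) : IsFeLinear q φ := by
  obtain ⟨m, c, ψ, -, hψ, hφ⟩ := hφ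
  refine ⟨fun x y => ?_, fun t x => ?_⟩
  · simp only [hφ, mul_add, (hψ _).1, Finset.sum_add_distrib]
  · simp only [hφ, Finset.mul_sum, mul_left_comm (c _) (t ^ q), (hψ _).2]

lemma of_isFeLinear {c : S} (hc : c ∈ J) {ψ : S → S} (hψ : IsFeLinear q ψ) :
    InFeSubmodule q J fun s => ψ (c * s) :=
  ⟨1, fun _ => c, fun _ => ψ, fun _ => hc, fun _ => hψ, fun s => by simp⟩

lemma map_mem (hφ : InFeSubmodule q J φ) {I : Ideal S} {x : S}
    (hx : ∀ c ∈ J, c * x ∈ frobPow q I) : φ x ∈ I := by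
  obtain ⟨m, c, ψ, hc, hψ, hφ⟩ := hφ
  rw [hφ]
  exact I.sum_mem fun i _ => (hψ i).map_mem_of_mem_frobPow (hx _ (hc i))

end InFeSubmodule

namespace MvPolynomial

variable {σ : Type*}

section BoxExponents

variable [Finite σ] {q : ℕ}

noncomputable def boxExp (a : σ → Fin q) : σ →₀ ℕ :=
  Finsupp.equivFunOnFinite.symm fun i => a i

@[simp]
lemma boxExp_apply (a : σ → Fin q) (i : σ) : boxExp a i = a i := rfl

lemma smul_add_boxExp_apply (m : σ →₀ ℕ) (a : σ → Fin q) (i : σ) :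
    (q • m + boxExp a) i = q * m i + a i := rfl

lemma smul_add_boxExp_injective (hq : 0 < q) (a : σ → Fin q) :
    Function.Injective fun m : σ →₀ ℕ => q • m + boxExp a := by
  intro m m' h
  ext i
  have hi := congrArg (· i) h
  simp only [smul_add_boxExp_apply, Nat.add_right_cancel_iff] at hi
  exact Nat.eq_of_mul_eq_mul_left hq hi

lemma smul_le_smul_add_boxExp_iff (N m : σ →₀ ℕ) (a : σ → Fin q) :
    q • N ≤ q • m + boxExp a ↔ N ≤ m := by
  simp only [Finsupp.le_def, smul_add_boxExp_apply, Finsupp.smul_apply, smul_eq_mul]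
  refine forall_congr' fun i => ⟨fun h => ?_, fun h => ?_⟩
  · exact Nat.le_of_lt_succ <| Nat.lt_of_mul_lt_mul_left (a := q) <| by
      rw [Nat.mul_succ]; exact lt_of_le_of_lt h (Nat.add_lt_add_left (a i).isLt _)
  · exact le_add_right (Nat.mul_le_mul_left q h)

lemma smul_add_boxExp_tsub_smul {N m : σ →₀ ℕ} (h : N ≤ m) (a : σ → Fin q) :
    q • m + boxExp a - q • N = q • (m - N) + boxExp a := by
  ext i
  have hi := Nat.mul_le_mul_left q (h i)
  simp only [Finsupp.tsub_apply, smul_add_boxExp_apply, Finsupp.smul_apply, smul_eq_mul,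
    Nat.mul_sub]
  omega

def topBox (hq : 0 < q) : σ → Fin q := fun _ => ⟨q - 1, by omega⟩

lemma boxExp_rev_le (hq : 0 < q) (m : σ →₀ ℕ) (a : σ → Fin q) :
    boxExp (Fin.rev ∘ a) ≤ q • m + boxExp (topBox hq) := by
  intro i
  simp only [boxExp_apply, Function.comp_apply, Fin.val_rev, smul_add_boxExp_apply, topBox]
  omega

lemma smul_add_boxExp_sub_boxExp_rev (hq : 0 < q) (m : σ →₀ ℕ) (a : σ → Fin q) :
    q • m + boxExp (topBox hq) - boxExp (Fin.rev ∘ a) = q • m + boxExp a := by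
  ext i
  have := (a i).isLt
  simp only [Finsupp.tsub_apply, boxExp_apply, Function.comp_apply, Fin.val_rev,
    smul_add_boxExp_apply, topBox]
  omega

lemma boxExp_eq_smul_add_boxExp_iff (m : σ →₀ ℕ) (a b : σ → Fin q) :
    boxExp b = q • m + boxExp a ↔ a = b ∧ m = 0 := by
  constructor
  · intro h
    have hi : ∀ i, (b i : ℕ) = q * m i + a i := fun i => congrArg (· i) h
    have hm : ∀ i, m i = 0 := fun i => by
      by_contra hne
      have := Nat.mul_le_mul_left q (Nat.one_le_iff_ne_zero.2 hne)
      have := (b i).isLt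
      have := hi i
      omega
    refine ⟨?_, Finsupp.ext hm⟩
    funext i
    ext
    simp [hi i, hm i]
  · rintro ⟨rfl, rfl⟩
    rw [smul_zero, zero_add]

lemma smul_div_add_boxExp_mod (hq : 0 < q) (M : σ →₀ ℕ) :
    q • M.mapRange (· / q) (Nat.zero_div q) + boxExp (fun i => ⟨M i % q, Nat.mod_lt _ hq⟩) =
      M := by
  ext i
  exact Nat.div_add_mod (M i) q

end BoxExponents

section FrobeniusRoots

variable {k : Type*} [CommRing k] (p e : ℕ) [ExpChar k p] [PerfectRing k p]

/-- `frobRoot p e a f` is the `p ^ e`-th root of the component of `f` along `x ^ a`, so that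
`f = ∑ a, frobRoot p e a f ^ p ^ e * x ^ a` (`sum_frobRoot_pow_mul_monomial`). -/
noncomputable def frobRoot [Finite σ] (a : σ → Fin (p ^ e)) :
    MvPolynomial σ k →+ MvPolynomial σ k where
  toFun f := AddMonoidAlgebra.ofCoeff <|
    Finsupp.mapRange (iterateFrobeniusEquiv k p e).symm (map_zero _) <|
      Finsupp.comapDomain (fun m => p ^ e • m + boxExp a) (AddMonoidAlgebra.coeff f)
        (smul_add_boxExp_injective (pow_pos (expChar_pos k p) e) a).injOn
  map_zero' := by ext; exact map_zero (iterateFrobeniusEquiv k p e).symm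
  map_add' f g := by
    ext m
    exact map_add (iterateFrobeniusEquiv k p e).symm
      (coeff (p ^ e • m + boxExp a) f) (coeff (p ^ e • m + boxExp a) g)

variable [Finite σ]

lemma coeff_frobRoot (a : σ → Fin (p ^ e)) (f : MvPolynomial σ k) (m : σ →₀ ℕ) :
    coeff m (frobRoot p e a f) =
      (iterateFrobeniusEquiv k p e).symm (coeff (p ^ e • m + boxExp a) f) :=
  rfl

lemma frobRoot_monomial_pow_mul (a : σ → Fin (p ^ e)) (N : σ →₀ ℕ) (c : k)
    (f : MvPolynomial σ k) :
    frobRoot p e a (monomial N c ^ p ^ e * f) = monomial N c * frobRoot p e a f := by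
  ext m
  rw [coeff_frobRoot, monomial_pow, coeff_monomial_mul', coeff_monomial_mul']
  simp only [smul_le_smul_add_boxExp_iff]
  split_ifs with h
  · rw [smul_add_boxExp_tsub_smul h, map_mul, coeff_frobRoot, ← iterateFrobeniusEquiv_def,
      RingEquiv.symm_apply_apply]
  · exact map_zero _

lemma frobRoot_pow_mul (a : σ → Fin (p ^ e)) (t f : MvPolynomial σ k) :
    frobRoot p e a (t ^ p ^ e * f) = t * frobRoot p e a f := by
  induction t using MvPolynomial.induction_on' with
  | monomial N c => exact frobRoot_monomial_pow_mul p e a N c f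
  | add t₁ t₂ h₁ h₂ => rw [add_pow_expChar_pow, add_mul, map_add, h₁, h₂, add_mul]

lemma isFeLinear_frobRoot (a : σ → Fin (p ^ e)) :
    IsFeLinear (p ^ e) (frobRoot (k := k) p e a) :=
  ⟨map_add _, frobRoot_pow_mul p e a⟩

lemma frobRoot_monomial_boxExp_self (a : σ → Fin (p ^ e)) :
    frobRoot p e a (monomial (boxExp a) (1 : k)) = 1 := by
  classical
  ext m
  simp only [coeff_frobRoot, coeff_monomial, boxExp_eq_smul_add_boxExp_iff, true_and, coeff_one,
    eq_comm (a := (0 : σ →₀ ℕ))]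
  split_ifs <;> simp

lemma frobRoot_monomial_boxExp_of_ne {a b : σ → Fin (p ^ e)} (hab : a ≠ b) :
    frobRoot p e a (monomial (boxExp b) (1 : k)) = 0 := by
  classical
  ext m
  simp [hab, coeff_frobRoot, coeff_monomial, boxExp_eq_smul_add_boxExp_iff]

lemma exists_monomial_eq_pow_mul_monomial_boxExp (M : σ →₀ ℕ) (c : k) :
    ∃ (t : MvPolynomial σ k) (b : σ → Fin (p ^ e)),
      monomial M c = t ^ p ^ e * monomial (boxExp b) 1 := by
  have hq := pow_pos (expChar_pos k p) e
  refine ⟨monomial (M.mapRange (· / p ^ e) (Nat.zero_div _))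
    ((iterateFrobeniusEquiv k p e).symm c), fun i => ⟨M i % p ^ e, Nat.mod_lt _ hq⟩, ?_⟩
  rw [monomial_pow, monomial_mul, smul_div_add_boxExp_mod hq, mul_one,
    ← iterateFrobeniusEquiv_def, RingEquiv.apply_symm_apply]

/-- The trace map `Φ` of the paper: it generates `Hom_S(F^e_* S, S)` as an `F^e_* S`-module. -/
noncomputable def frobTrace : MvPolynomial σ k →+ MvPolynomial σ k :=
  frobRoot p e (topBox (pow_pos (expChar_pos k p) e))

lemma frobTrace_monomial_boxExp_rev_mul (a : σ → Fin (p ^ e)) (f : MvPolynomial σ k) :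
    frobTrace p e (monomial (boxExp (Fin.rev ∘ a)) 1 * f) = frobRoot p e a f := by
  have hq := pow_pos (expChar_pos k p) e
  ext m
  rw [frobTrace, coeff_frobRoot, coeff_monomial_mul', if_pos (boxExp_rev_le hq m a),
    smul_add_boxExp_sub_boxExp_rev hq, one_mul, coeff_frobRoot]

end FrobeniusRoots

section FrobeniusTrace

variable {k : Type*} [CommRing k] (p e : ℕ) [ExpChar k p] [PerfectRing k p]
variable [Fintype σ] [DecidableEq σ]

lemma sum_frobRoot_pow_mul_monomial (f : MvPolynomial σ k) :
    ∑ a : σ → Fin (p ^ e), frobRoot p e a f ^ p ^ e * monomial (boxExp a) 1 = f := by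
  induction f using MvPolynomial.induction_on' with
  | monomial M c =>
    obtain ⟨t, b, h⟩ := exists_monomial_eq_pow_mul_monomial_boxExp p e M c
    rw [h, Finset.sum_eq_single b]
    · rw [frobRoot_pow_mul, frobRoot_monomial_boxExp_self, mul_one]
    · intro a _ hab
      rw [frobRoot_pow_mul, frobRoot_monomial_boxExp_of_ne p e hab, mul_zero,
        zero_pow (pow_pos (expChar_pos k p) e).ne', zero_mul]
    · exact fun h => absurd (Finset.mem_univ b) h
  | add f g hf hg =>
    simp only [map_add, add_pow_expChar_pow, add_mul, Finset.sum_add_distrib, hf, hg]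

/-- `s ↦ frobTrace (frobTraceRep v * s)` is the `S`-linear map sending `x ^ a` to `v a`. -/
noncomputable def frobTraceRep (v : (σ → Fin (p ^ e)) → MvPolynomial σ k) : MvPolynomial σ k :=
  ∑ a, v a ^ p ^ e * monomial (boxExp (Fin.rev ∘ a)) 1

lemma frobTrace_frobTraceRep_mul (v : (σ → Fin (p ^ e)) → MvPolynomial σ k)
    (s : MvPolynomial σ k) :
    frobTrace p e (frobTraceRep p e v * s) = ∑ a, v a * frobRoot p e a s := by
  rw [frobTraceRep, Finset.sum_mul, map_sum]
  refine Finset.sum_congr rfl fun a _ => ?_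
  rw [mul_assoc, frobTrace, frobRoot_pow_mul, ← frobTrace, frobTrace_monomial_boxExp_rev_mul]

lemma _root_.IsFeLinear.eq_frobTrace_frobTraceRep_mul {φ : MvPolynomial σ k → MvPolynomial σ k}
    (hφ : IsFeLinear (p ^ e) φ) (s : MvPolynomial σ k) :
    φ s = frobTrace p e (frobTraceRep p e (fun a => φ (monomial (boxExp a) 1)) * s) := by
  rw [frobTrace_frobTraceRep_mul]
  conv_lhs => rw [← sum_frobRoot_pow_mul_monomial p e s]
  rw [hφ.map_sum]
  exact Finset.sum_congr rfl fun a _ => by rw [hφ.2, mul_comm]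

lemma frobTrace_mul_mem_iff (I : Ideal (MvPolynomial σ k)) (u : MvPolynomial σ k) :
    (∀ s, frobTrace p e (u * s) ∈ I) ↔ u ∈ frobPow (p ^ e) I := by
  refine ⟨fun h => ?_, fun hu s => ?_⟩
  · rw [← sum_frobRoot_pow_mul_monomial p e u]
    refine Ideal.sum_mem _ fun a _ => Ideal.mul_mem_right _ _ (Ideal.subset_span ⟨_, ?_, rfl⟩)
    rw [SetLike.mem_coe, ← frobTrace_monomial_boxExp_rev_mul, mul_comm]
    exact h _
  · exact (isFeLinear_frobRoot p e _).map_mem_of_mem_frobPow (Ideal.mul_mem_right s _ hu)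

lemma mem_colon_frobPow_iff (I : Ideal (MvPolynomial σ k)) (u : MvPolynomial σ k) :
    u ∈ (frobPow (p ^ e) I).colon I ↔ ∀ x ∈ I, frobTrace p e (u * x) ∈ I := by
  simp only [Submodule.mem_colon, smul_eq_mul, ← frobTrace_mul_mem_iff]
  refine ⟨fun h x hx => by simpa using h x hx 1, fun h x hx s => ?_⟩
  rw [mul_assoc]
  exact h _ (I.mul_mem_right s hx)

lemma _root_.IsFeLinear.inFeSubmodule_frobPow_iff {φ : MvPolynomial σ k → MvPolynomial σ k}
    (hφ : IsFeLinear (p ^ e) φ) (I : Ideal (MvPolynomial σ k)) :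
    InFeSubmodule (p ^ e) (frobPow (p ^ e) I) φ ↔ ∀ s, φ s ∈ I := by
  refine ⟨fun h s => h.map_mem fun c hc => Ideal.mul_mem_right s _ hc, fun h => ?_⟩
  have hrep := hφ.eq_frobTrace_frobTraceRep_mul p e
  rw [_root_.funext hrep]
  refine InFeSubmodule.of_isFeLinear ?_ (isFeLinear_frobRoot p e _)
  exact (frobTrace_mul_mem_iff p e I _).1 fun s => hrep s ▸ h s

lemma exists_frobTrace_mul_lift (I : Ideal (MvPolynomial σ k))
    (ψ : MvPolynomial σ k ⧸ I → MvPolynomial σ k ⧸ I) (hadd : ∀ x y, ψ (x + y) = ψ x + ψ y)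
    (hlin : ∀ r x, ψ (r ^ p ^ e * x) = r * ψ x) :
    ∃ u, ∀ s, Ideal.Quotient.mk I (frobTrace p e (u * s)) = ψ (Ideal.Quotient.mk I s) := by
  choose v hv using fun a : σ → Fin (p ^ e) =>
    Ideal.Quotient.mk_surjective (ψ (Ideal.Quotient.mk I (monomial (boxExp a) 1)))
  refine ⟨frobTraceRep p e v, fun s => ?_⟩
  calc Ideal.Quotient.mk I (frobTrace p e (frobTraceRep p e v * s))
      = ∑ a, ψ (Ideal.Quotient.mk I (frobRoot p e a s ^ p ^ e * monomial (boxExp a) 1)) := by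
        rw [frobTrace_frobTraceRep_mul, map_sum]
        refine Finset.sum_congr rfl fun a _ => ?_
        rw [map_mul, hv, map_mul, map_pow, hlin, mul_comm]
    _ = ψ (Ideal.Quotient.mk I (∑ a, frobRoot p e a s ^ p ^ e * monomial (boxExp a) 1)) := by
        rw [map_sum]
        exact (map_sum (AddMonoidHom.mk' ψ hadd) _ _).symm
    _ = ψ (Ideal.Quotient.mk I s) := by rw [sum_frobRoot_pow_mul_monomial]

end FrobeniusTrace

end MvPolynomial

theorem stmt_19_general {k : Type*} [Field k] (p : ℕ) (hp : p.Prime) [CharP k p]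
    [PerfectField k]
    (n e : ℕ)
    (I : Ideal (MvPolynomial (Fin n) k)) :
    (∀ φ : MvPolynomial (Fin n) k → MvPolynomial (Fin n) k,
      InFeSubmodule (p ^ e) (Submodule.colon (frobPow (p ^ e) I) I) φ →
      ∀ x ∈ I, φ x ∈ I) ∧
    (∀ ψ : MvPolynomial (Fin n) k ⧸ I → MvPolynomial (Fin n) k ⧸ I,
      (∀ x y, ψ (x + y) = ψ x + ψ y) →
      (∀ r x, ψ (r ^ p ^ e * x) = r * ψ x) →
      ∃ φ : MvPolynomial (Fin n) k → MvPolynomial (Fin n) k,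
        InFeSubmodule (p ^ e) (Submodule.colon (frobPow (p ^ e) I) I) φ ∧
        ∀ s, Ideal.Quotient.mk I (φ s) = ψ (Ideal.Quotient.mk I s)) ∧
    (∀ φ : MvPolynomial (Fin n) k → MvPolynomial (Fin n) k,
      InFeSubmodule (p ^ e) (Submodule.colon (frobPow (p ^ e) I) I) φ →
      ((∀ s, Ideal.Quotient.mk I (φ s) = 0) ↔
        InFeSubmodule (p ^ e) (frobPow (p ^ e) I) φ)) := by
  have : ExpChar k p := ExpChar.prime hp
  refine ⟨fun φ hφ x hx => hφ.map_mem fun c hc => Submodule.mem_colon.1 hc x hx,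
    fun ψ hadd hlin => ?_, fun φ hφ => ?_⟩
  · obtain ⟨u, hu⟩ := exists_frobTrace_mul_lift p e I ψ hadd hlin
    have hψ0 : ψ 0 = 0 := (AddMonoidHom.mk' ψ hadd).map_zero
    have hu_colon : u ∈ (frobPow (p ^ e) I).colon I := by
      refine (mem_colon_frobPow_iff p e I u).2 fun x hx => ?_
      rw [← Ideal.Quotient.eq_zero_iff_mem, hu, Ideal.Quotient.eq_zero_iff_mem.2 hx, hψ0]
    exact ⟨_, InFeSubmodule.of_isFeLinear hu_colon (isFeLinear_frobRoot p e _), hu⟩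
  · simp only [Ideal.Quotient.eq_zero_iff_mem]
    exact (hφ.isFeLinear.inFeSubmodule_frobPow_iff p e I).symm

/-- Fedder's Lemma, part (d): the submodule
`M = (F^e_*(I^{[q]} : I)) · Hom_S(F^e_* S, S)` consists of maps compatible
with `I`; the map `M → Hom_R(F^e_* R, R)`, `φ ↦ φ/I`, is surjective, and its
kernel is `(F^e_* I^{[q]}) · Hom_S(F^e_* S, S)`. -/
theorem stmt_19 {k : Type*} [Field k] (p : ℕ) (hp : p.Prime) [CharP k p]
    [PerfectField k]
    (n e : ℕ) (he : 1 ≤ e)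
    (I : Ideal (MvPolynomial (Fin n) k)) :
    (∀ φ : MvPolynomial (Fin n) k → MvPolynomial (Fin n) k,
      InFeSubmodule (p ^ e) (Submodule.colon (frobPow (p ^ e) I) I) φ →
      ∀ x ∈ I, φ x ∈ I) ∧
    (∀ ψ : MvPolynomial (Fin n) k ⧸ I → MvPolynomial (Fin n) k ⧸ I,
      (∀ x y, ψ (x + y) = ψ x + ψ y) →
      (∀ r x, ψ (r ^ p ^ e * x) = r * ψ x) →
      ∃ φ : MvPolynomial (Fin n) k → MvPolynomial (Fin n) k,
        InFeSubmodule (p ^ e) (Submodule.colon (frobPow (p ^ e) I) I) φ ∧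
        ∀ s, Ideal.Quotient.mk I (φ s) = ψ (Ideal.Quotient.mk I s)) ∧
    (∀ φ : MvPolynomial (Fin n) k → MvPolynomial (Fin n) k,
      InFeSubmodule (p ^ e) (Submodule.colon (frobPow (p ^ e) I) I) φ →
      ((∀ s, Ideal.Quotient.mk I (φ s) = 0) ↔
        InFeSubmodule (p ^ e) (frobPow (p ^ e) I) φ)) :=
  stmt_19_general p hp n e I
end
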